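/- arXiv:1902.03470 — 5 statements merged into one kernel-verified Lean document; each statement's English description precedes it below -/
import Mathlib

section
/- Let m, p be natural numbers with 1 ≤ p ≤ m, and let x_1, …, x_m be complex numbers. Then the sum, over all partitions {I_1, …, I_p} of the index set {1, …, m} into p nonempty (unordered) blocks, of the product ∏_{j=1}^{p} (∑_{i ∈ I_j} x_i)^{|I_j| − 1}, equals C(m−1, p−1) · (∑_{i=1}^{m} x_i)^{m−p}, where C(·,·) denotes the binomial coefficient. -/
/-- `IsPartitionInto p S P` means `P` is a partition of the finset `S` into `p`
nonempty, pairwise disjoint blocks whose union is `S`. -/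
def IsPartitionInto {ι : Type*} [DecidableEq ι] (p : ℕ) (S : Finset ι)
    (P : Finset (Finset ι)) : Prop :=
  P.card = p ∧ (∅ : Finset ι) ∉ P ∧
    (∀ I ∈ P, ∀ J ∈ P, I ≠ J → Disjoint I J) ∧ P.sup id = S

instance {ι : Type*} [DecidableEq ι] (p : ℕ) (S : Finset ι) :
    DecidablePred (IsPartitionInto p S) := fun _ => by
  unfold IsPartitionInto; infer_instance

section Aux

open Polynomial Finset

lemma finite_diff {ι : Type*} [DecidableEq ι] (z : ι → ℂ) :
    ∀ (U : Finset ι) (P : ℂ[X]), P.degree < (U.card : ℕ) →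
      ∑ T ∈ U.powerset, (-1:ℂ)^(U.card - T.card) * P.eval (∑ i ∈ T, z i) = 0 := by
  intro U
  induction U using Finset.induction_on with
  | empty =>
    intro P hP
    simp only [Finset.card_empty, Nat.cast_zero] at hP
    have : P = 0 := degree_eq_bot.mp (Nat.WithBot.lt_zero_iff.mp hP)
    simp [this]
  | @insert u S hu IH =>
    intro P hP
    rw [Finset.powerset_insert, Finset.sum_union ?hdisj, Finset.sum_image ?hinj]
    case hdisj =>
      rw [Finset.disjoint_left]
      intro T hT hT2
      rcases Finset.mem_image.mp hT2 with ⟨T', hT', rfl⟩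
      exact hu ((Finset.mem_powerset.mp hT) (Finset.mem_insert_self u T'))
    case hinj =>
      intro T hT T' hT' h
      have huT : u ∉ T := fun hh => hu ((Finset.mem_powerset.mp hT) hh)
      have huT' : u ∉ T' := fun hh => hu ((Finset.mem_powerset.mp hT') hh)
      rw [← Finset.erase_insert huT, ← Finset.erase_insert huT', h]
    have hc : (insert u S).card = S.card + 1 := Finset.card_insert_of_notMem hu
    set Q : ℂ[X] := P.comp (X + C (z u)) - P with hQ
    have key : ∀ T ∈ S.powerset,
        (-1:ℂ)^((insert u S).card - T.card) * P.eval (∑ i ∈ T, z i)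
        + (-1:ℂ)^((insert u S).card - (insert u T).card) * P.eval (∑ i ∈ insert u T, z i)
        = (-1:ℂ)^(S.card - T.card) * (Q.eval (∑ i ∈ T, z i)) := by
      intro T hT
      have hTS : T ⊆ S := Finset.mem_powerset.mp hT
      have huT : u ∉ T := fun h => hu (hTS h)
      have hcT : (insert u T).card = T.card + 1 := Finset.card_insert_of_notMem huT
      have hle : T.card ≤ S.card := Finset.card_le_card hTS
      rw [hc, hcT, Finset.sum_insert huT, add_comm (z u) (∑ i ∈ T, z i)]
      have h1 : S.card + 1 - T.card = (S.card - T.card) + 1 := by omega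
      have h2 : S.card + 1 - (T.card + 1) = S.card - T.card := by omega
      rw [h1, h2, hQ]
      simp only [eval_sub, eval_comp, eval_add, eval_X, eval_C, pow_succ]
      ring
    rw [← Finset.sum_add_distrib, Finset.sum_congr rfl key]
    by_cases hQ0 : Q = 0
    · simp [hQ0]
    · have hPne : P ≠ 0 := by
        intro h; apply hQ0; rw [hQ, h]; simp
      have hlc : (P.comp (X + C (z u))).leadingCoeff = P.leadingCoeff := by
        rw [Polynomial.leadingCoeff_comp (by simp [natDegree_X_add_C]),
          (monic_X_add_C (z u)).leadingCoeff, one_pow, mul_one]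
      have hcompne : P.comp (X + C (z u)) ≠ 0 := by
        rw [← leadingCoeff_ne_zero, hlc, leadingCoeff_ne_zero]; exact hPne
      have hdeg : (P.comp (X + C (z u))).degree = P.degree := by
        rw [degree_eq_natDegree hcompne, degree_eq_natDegree hPne,
          Polynomial.natDegree_comp, natDegree_X_add_C, mul_one]
      have hQlt : Q.degree < P.degree := by
        have := Polynomial.degree_sub_lt hdeg hcompne hlc
        rwa [hdeg] at this
      have h1 : Q.natDegree < P.natDegree := natDegree_lt_natDegree hQ0 hQlt
      have h2 : P.natDegree < S.card + 1 := by
        rw [Polynomial.natDegree_lt_iff_degree_lt hPne]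
        rw [hc] at hP; exact_mod_cast hP
      exact IH Q ((Polynomial.natDegree_lt_iff_degree_lt hQ0).mp (by omega))

lemma PA {ι : Type*} [DecidableEq ι] (z : ι → ℂ) (U : Finset ι) :
    ∀ (x c : ℂ),
      (X + C (c + ∑ i ∈ U, z i)) ^ U.card
        + ∑ T ∈ U.powerset.filter (· ≠ ∅),
            C (x * (x + ∑ i ∈ T, z i) ^ (T.card - 1)) * (X + C (c + ∑ i ∈ U \ T, z i)) ^ (U \ T).card
      = (X + C (c + x + ∑ i ∈ U, z i)) ^ U.card := by
  induction U using Finset.strongInduction with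
  | _ U IH =>
  intro x c
  rcases U.eq_empty_or_nonempty with rfl | hU
  · simp [Finset.filter_singleton]
  have hn : 1 ≤ U.card := Finset.card_pos.mpr hU
  -- the identity for erased sets, reindexed
  have hIHu : ∀ u ∈ U,
      (X + C (c + ∑ i ∈ U, z i)) ^ (U.card - 1)
        + ∑ T ∈ (U.powerset.filter (· ≠ ∅)).filter (fun T => u ∉ T),
            C (x * (x + ∑ i ∈ T, z i) ^ (T.card - 1)) *
              (X + C (c + ∑ i ∈ U \ T, z i)) ^ ((U \ T).card - 1)
      = (X + C (c + x + ∑ i ∈ U, z i)) ^ (U.card - 1) := by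
    intro u hu
    have h0 := IH (U.erase u) (Finset.erase_ssubset hu) x (c + z u)
    have hce : (U.erase u).card = U.card - 1 := Finset.card_erase_of_mem hu
    have hσ : (c + z u) + ∑ i ∈ U.erase u, z i = c + ∑ i ∈ U, z i := by
      rw [add_assoc, Finset.add_sum_erase U z hu]
    have hσ' : (c + z u) + x + ∑ i ∈ U.erase u, z i = c + x + ∑ i ∈ U, z i := by
      have : (c + z u) + x + ∑ i ∈ U.erase u, z i
          = (c + x) + (z u + ∑ i ∈ U.erase u, z i) := by ring
      rw [this, Finset.add_sum_erase U z hu]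
    rw [hce, hσ', ] at h0
    rw [← h0, hσ]
    congr 1
    apply Finset.sum_nbij' (fun T => T) (fun T => T)
    · intro T hT
      simp only [Finset.mem_filter, Finset.mem_powerset, Finset.subset_erase] at hT ⊢
      tauto
    · intro T hT
      simp only [Finset.mem_filter, Finset.mem_powerset, Finset.subset_erase] at hT ⊢
      tauto
    · intros; rfl
    · intros; rfl
    · intro T hT
      simp only [Finset.mem_filter, Finset.mem_powerset, Finset.subset_erase] at hT
      obtain ⟨⟨hTU, hTne⟩, huT⟩ := hT
      have he : U.erase u \ T = (U \ T).erase u := by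
        ext a; simp [Finset.mem_erase, Finset.mem_sdiff]; tauto
      have humem : u ∈ U \ T := Finset.mem_sdiff.mpr ⟨hu, huT⟩
      have hcard : ((U \ T).erase u).card = (U \ T).card - 1 :=
        Finset.card_erase_of_mem humem
      have hσ2 : (c + z u) + ∑ i ∈ (U \ T).erase u, z i = c + ∑ i ∈ U \ T, z i := by
        rw [add_assoc, Finset.add_sum_erase _ z humem]
      rw [he, hcard, hσ2]
  -- sum the above over u ∈ U
  have hsum := Finset.sum_congr rfl hIHu
  rw [Finset.sum_const, Finset.sum_add_distrib, Finset.sum_const] at hsum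
  have hswap : ∑ u ∈ U, ∑ T ∈ (U.powerset.filter (· ≠ ∅)).filter (fun T => u ∉ T),
        C (x * (x + ∑ i ∈ T, z i) ^ (T.card - 1)) *
          (X + C (c + ∑ i ∈ U \ T, z i)) ^ ((U \ T).card - 1)
      = ∑ T ∈ U.powerset.filter (· ≠ ∅), (U \ T).card •
          (C (x * (x + ∑ i ∈ T, z i) ^ (T.card - 1)) *
            (X + C (c + ∑ i ∈ U \ T, z i)) ^ ((U \ T).card - 1)) := by
    have : ∀ u ∈ U, ∑ T ∈ (U.powerset.filter (· ≠ ∅)).filter (fun T => u ∉ T),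
        C (x * (x + ∑ i ∈ T, z i) ^ (T.card - 1)) *
          (X + C (c + ∑ i ∈ U \ T, z i)) ^ ((U \ T).card - 1)
        = ∑ T ∈ U.powerset.filter (· ≠ ∅), if u ∉ T then
            C (x * (x + ∑ i ∈ T, z i) ^ (T.card - 1)) *
              (X + C (c + ∑ i ∈ U \ T, z i)) ^ ((U \ T).card - 1) else 0 :=
      fun u _ => Finset.sum_filter _ _
    rw [Finset.sum_congr rfl this, Finset.sum_comm]
    apply Finset.sum_congr rfl
    intro T hT
    rw [← Finset.sum_filter]
    have : U.filter (fun u => u ∉ T) = U \ T := by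
      ext a; simp [Finset.mem_sdiff, Finset.mem_filter]
    rw [this, Finset.sum_const]
  rw [hswap] at hsum
  simp only [nsmul_eq_mul] at hsum
  set n := U.card with hn'
  set Lp := (X + C (c + ∑ i ∈ U, z i)) ^ n +
      ∑ T ∈ U.powerset.filter (· ≠ ∅),
        C (x * (x + ∑ i ∈ T, z i) ^ (T.card - 1)) * (X + C (c + ∑ i ∈ U \ T, z i)) ^ (U \ T).card
    with hLp
  set Rp := (X + C (c + x + ∑ i ∈ U, z i)) ^ n with hRp
  show Lp = Rp
  have hderiv : derivative (Lp - Rp) = 0 := by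
    rw [derivative_sub, sub_eq_zero, hLp, hRp, derivative_add, derivative_sum]
    simp only [derivative_mul, derivative_C, zero_mul, zero_add, derivative_pow,
      derivative_add, derivative_X, derivative_C, add_zero, mul_one, C_eq_natCast]
    calc (↑n * (X + C (c + ∑ i ∈ U, z i)) ^ (n - 1) +
          ∑ T ∈ U.powerset.filter (· ≠ ∅),
            C (x * (x + ∑ i ∈ T, z i) ^ (T.card - 1)) *
              ((↑(U \ T).card : ℂ[X]) * (X + C (c + ∑ i ∈ U \ T, z i)) ^ ((U \ T).card - 1)))
        = ↑n * (X + C (c + ∑ i ∈ U, z i)) ^ (n - 1) +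
          ∑ T ∈ U.powerset.filter (· ≠ ∅),
            (↑(U \ T).card : ℂ[X]) * (C (x * (x + ∑ i ∈ T, z i) ^ (T.card - 1)) *
              (X + C (c + ∑ i ∈ U \ T, z i)) ^ ((U \ T).card - 1)) := by
          congr 1
          exact Finset.sum_congr rfl (fun T _ => by ring)
      _ = ↑n * (X + C (c + x + ∑ i ∈ U, z i)) ^ (n - 1) := hsum
  have hc0 := eq_C_of_derivative_eq_zero hderiv
  set y0 : ℂ := -(c + x + ∑ i ∈ U, z i) with hy0
  have hdeg : (C x * (X + C x) ^ (n - 1)).degree < (n : WithBot ℕ) := by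
    apply lt_of_le_of_lt (Polynomial.degree_mul_le _ _)
    calc (C x).degree + ((X + C x) ^ (n-1)).degree
        ≤ 0 + ((X + C x) ^ (n-1)).degree := by gcongr; exact Polynomial.degree_C_le
      _ = ((X + C x) ^ (n-1)).degree := by rw [zero_add]
      _ = (n-1) • (X + C x).degree := Polynomial.degree_pow _ _
      _ = ((n-1 : ℕ) : WithBot ℕ) := by rw [Polynomial.degree_X_add_C]; simp [nsmul_eq_mul]
      _ < (n : WithBot ℕ) := by exact_mod_cast by omega
  have hfd := finite_diff z U (C x * (X + C x) ^ (n - 1)) hdeg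
  rw [← Finset.sum_filter_add_sum_filter_not U.powerset (fun T => T = ∅)] at hfd
  have hfe : U.powerset.filter (fun T => T = ∅) = {(∅ : Finset ι)} := by
    rw [Finset.filter_eq']; simp
  rw [hfe, Finset.sum_singleton] at hfd
  have hevalL : Lp.eval y0 = 0 := by
    rw [hLp]
    simp only [eval_add, eval_pow, eval_mul, eval_X, eval_C, eval_finset_sum]
    rw [← hfd]
    congr 1
    · have h1 : y0 + (c + ∑ i ∈ U, z i) = -x := by rw [hy0]; ring
      rw [h1]
      simp only [Finset.card_empty, Finset.sum_empty, eval_mul, eval_pow, eval_add,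
        eval_X, eval_C, zero_add, Nat.sub_zero]
      have h2 : x * x ^ (n-1) = x ^ n := by
        rw [← pow_succ']; congr 1; omega
      rw [neg_pow, h2]
    · apply Finset.sum_congr (by ext T; simp [ne_eq])
      intro T hT
      simp only [Finset.mem_filter, Finset.mem_powerset] at hT
      obtain ⟨hTU, hTne⟩ := hT
      have hsd := Finset.sum_sdiff (f := z) hTU
      have hcd : (U \ T).card = n - T.card := Finset.card_sdiff_of_subset hTU
      have hTpos : 1 ≤ T.card := Finset.card_pos.mpr (Finset.nonempty_of_ne_empty hTne)
      have hTle : T.card ≤ n := Finset.card_le_card hTU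
      have h1 : y0 + (c + ∑ i ∈ U \ T, z i) = -(x + ∑ i ∈ T, z i) := by
        rw [hy0]; linear_combination hsd
      rw [h1, hcd, neg_pow]
      have h2 : (x + ∑ i ∈ T, z i) ^ (T.card - 1) * (x + ∑ i ∈ T, z i) ^ (n - T.card)
          = (x + ∑ i ∈ T, z i) ^ (n - 1) := by
        rw [← pow_add]; congr 1; omega
      calc x * (x + ∑ i ∈ T, z i) ^ (T.card - 1) *
            ((-1)^(n - T.card) * (x + ∑ i ∈ T, z i) ^ (n - T.card))
          = (-1)^(n - T.card) * (x * ((x + ∑ i ∈ T, z i) ^ (T.card - 1) *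
              (x + ∑ i ∈ T, z i) ^ (n - T.card))) := by ring
        _ = (-1)^(n - T.card) * (x * ((∑ i ∈ T, z i) + x) ^ (n-1)) := by
              rw [h2, add_comm x (∑ i ∈ T, z i)]
        _ = (-1) ^ (U.card - T.card) * eval (∑ i ∈ T, z i) (C x * (X + C x) ^ (n - 1)) := by
              simp [hn']
  have hevalR : Rp.eval y0 = 0 := by
    rw [hRp]
    simp only [eval_pow, eval_add, eval_X, eval_C]
    rw [hy0]
    rw [neg_add_cancel]
    exact zero_pow (by omega)
  have hz : (Lp - Rp).eval y0 = 0 := by rw [eval_sub, hevalL, hevalR, sub_self]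
  rw [hc0, eval_C] at hz
  have : Lp - Rp = 0 := by rw [hc0, hz, map_zero]
  exact sub_eq_zero.mp this

lemma A_eval {ι : Type*} [DecidableEq ι] (z : ι → ℂ) (U : Finset ι) (x y : ℂ) :
    (y + ∑ i ∈ U, z i) ^ U.card
      + ∑ T ∈ U.powerset.filter (· ≠ ∅),
          x * (x + ∑ i ∈ T, z i) ^ (T.card - 1) * (y + ∑ i ∈ U \ T, z i) ^ (U \ T).card
    = (x + y + ∑ i ∈ U, z i) ^ U.card := by
  have h := congrArg (Polynomial.eval y) (PA z U x 0)
  simp only [eval_add, eval_pow, eval_mul, eval_X, eval_C, eval_finset_sum, zero_add] at h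
  have e : x + y + ∑ i ∈ U, z i = y + (x + ∑ i ∈ U, z i) := by ring
  rw [e, ← h]

lemma PL {ι : Type*} [DecidableEq ι] (z : ι → ℂ) (U : Finset ι) (x : ℂ) :
    C ((x + ∑ i ∈ U, z i) ^ U.card)
      + ∑ T ∈ U.powerset.filter (· ≠ U),
          C ((x + ∑ i ∈ T, z i) ^ T.card) *
            (X * (X + C (∑ i ∈ U \ T, z i)) ^ ((U \ T).card - 1))
    = (X + C (x + ∑ i ∈ U, z i)) ^ U.card := by
  apply Polynomial.funext
  intro y
  simp only [eval_add, eval_pow, eval_mul, eval_X, eval_C, eval_finset_sum]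
  have h := A_eval z U y x
  have e : y + (x + ∑ i ∈ U, z i) = y + x + ∑ i ∈ U, z i := by ring
  rw [e, ← h]
  congr 1
  apply Finset.sum_nbij' (fun T => U \ T) (fun T => U \ T)
  · intro T hT
    simp only [Finset.mem_filter, Finset.mem_powerset] at hT ⊢
    exact ⟨Finset.sdiff_subset, fun h0 =>
      hT.2 (Finset.Subset.antisymm hT.1 (Finset.sdiff_eq_empty_iff_subset.mp h0))⟩
  · intro T hT
    simp only [Finset.mem_filter, Finset.mem_powerset] at hT ⊢
    refine ⟨Finset.sdiff_subset, fun h0 => ?_⟩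
    obtain ⟨a, ha⟩ := Finset.nonempty_of_ne_empty hT.2
    have : a ∈ U \ T := h0.symm ▸ hT.1 ha
    exact (Finset.mem_sdiff.mp this).2 ha
  · intro T hT
    simp only [Finset.mem_filter, Finset.mem_powerset] at hT
    exact Finset.sdiff_sdiff_eq_self hT.1
  · intro T hT
    simp only [Finset.mem_filter, Finset.mem_powerset] at hT
    exact Finset.sdiff_sdiff_eq_self hT.1
  · intro T hT
    simp only [Finset.mem_filter, Finset.mem_powerset] at hT
    rw [Finset.sdiff_sdiff_eq_self hT.1]
    ring

lemma K {ι : Type*} [DecidableEq ι] (z : ι → ℂ) (U : Finset ι) (x : ℂ) (q : ℕ) :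
    ∑ T ∈ U.powerset.filter (· ≠ U),
        (x + ∑ i ∈ T, z i) ^ T.card *
          ((∑ i ∈ U \ T, z i) ^ ((U \ T).card - 1 - q) * ((U \ T).card - 1).choose q)
    = (x + ∑ i ∈ U, z i) ^ (U.card - (q+1)) * (U.card.choose (q+1)) := by
  have h := congrArg (fun P => Polynomial.coeff P (q+1)) (PL z U x)
  simp only [coeff_add, Polynomial.finset_sum_coeff, coeff_C_mul, coeff_X_mul,
    coeff_X_add_C_pow, coeff_C, Nat.succ_ne_zero, if_neg (Nat.succ_ne_zero q), zero_add] at h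
  rw [← h]
  simp

lemma part_card_le {ι : Type*} [DecidableEq ι] {n : ℕ} {S : Finset ι}
    {P : Finset (Finset ι)} (h : IsPartitionInto n S P) : n ≤ S.card := by
  obtain ⟨hc, hne, hdisj, hsup⟩ := h
  have hbi : S = P.biUnion id := by rw [← hsup, Finset.sup_eq_biUnion]
  have hcard : S.card = ∑ I ∈ P, I.card := by
    rw [hbi]
    exact Finset.card_biUnion (fun I hI J hJ hIJ => hdisj I hI J hJ hIJ)
  calc n = P.card := hc.symm
    _ = ∑ _I ∈ P, 1 := by rw [Finset.card_eq_sum_ones]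
    _ ≤ ∑ I ∈ P, I.card := by
        apply Finset.sum_le_sum
        intro I hI
        exact Finset.card_pos.mpr (Finset.nonempty_of_ne_empty (fun h0 => hne (h0 ▸ hI)))
    _ = S.card := hcard.symm

lemma part_one {ι : Type*} [DecidableEq ι] {S : Finset ι} (hS : S.Nonempty)
    {P : Finset (Finset ι)} : IsPartitionInto 1 S P ↔ P = {S} := by
  constructor
  · rintro ⟨hc, hne, hdisj, hsup⟩
    obtain ⟨I, hI⟩ := Finset.card_eq_one.mp hc
    subst hI
    rw [Finset.sup_singleton] at hsup
    simp only [id] at hsup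
    rw [hsup]
  · rintro rfl
    refine ⟨Finset.card_singleton S, ?_, ?_, Finset.sup_singleton⟩
    · simp only [Finset.mem_singleton]
      exact fun h => hS.ne_empty h.symm
    · intro I hI J hJ hIJ
      simp only [Finset.mem_singleton] at hI hJ
      exact absurd (hI.trans hJ.symm) hIJ

lemma blk_spec {ι : Type*} [DecidableEq ι] {n : ℕ} {S : Finset ι} {a : ι}
    {P : Finset (Finset ι)} (hP : IsPartitionInto n S P) (ha : a ∈ S) :
    ∃ B, B ∈ P ∧ a ∈ B ∧ (P.filter (fun I => a ∈ I)).sup id = B := by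
  obtain ⟨hc, hne, hdisj, hsup⟩ := hP
  have hmem : a ∈ P.sup id := hsup.symm ▸ ha
  rw [Finset.mem_sup] at hmem
  obtain ⟨B, hBP, haB⟩ := hmem
  refine ⟨B, hBP, haB, ?_⟩
  have hf : P.filter (fun I => a ∈ I) = {B} := by
    ext J
    simp only [Finset.mem_filter, Finset.mem_singleton]
    constructor
    · rintro ⟨hJP, haJ⟩
      by_contra hne'
      exact Finset.disjoint_left.mp (hdisj J hJP B hBP hne') haJ haB
    · rintro rfl; exact ⟨hBP, haB⟩
  rw [hf, Finset.sup_singleton]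
  rfl

lemma part_erase {ι : Type*} [DecidableEq ι] {n : ℕ} {S : Finset ι}
    {P : Finset (Finset ι)} {B : Finset ι} (hP : IsPartitionInto (n+1) S P)
    (hBP : B ∈ P) : B ⊆ S ∧ IsPartitionInto n (S \ B) (P.erase B) := by
  obtain ⟨hc, hne, hdisj, hsup⟩ := hP
  have hBS : B ⊆ S := hsup ▸ Finset.le_sup (f := id) hBP
  refine ⟨hBS, ?_, ?_, ?_, ?_⟩
  · rw [Finset.card_erase_of_mem hBP, hc]
    omega
  · exact fun h => hne (Finset.mem_of_mem_erase h)
  · intro I hI J hJ hIJ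
    exact hdisj I (Finset.mem_of_mem_erase hI) J (Finset.mem_of_mem_erase hJ) hIJ
  · ext t
    rw [Finset.mem_sup]
    simp only [Finset.mem_sdiff, id]
    constructor
    · rintro ⟨I, hI, htI⟩
      have hIP := Finset.mem_of_mem_erase hI
      have hIB : I ≠ B := Finset.ne_of_mem_erase hI
      refine ⟨hsup ▸ Finset.le_sup (f := id) hIP htI, ?_⟩
      exact fun htB => Finset.disjoint_left.mp (hdisj I hIP B hBP hIB) htI htB
    · rintro ⟨htS, htB⟩
      have : t ∈ P.sup id := hsup.symm ▸ htS
      rw [Finset.mem_sup] at this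
      obtain ⟨I, hIP, htI⟩ := this
      refine ⟨I, Finset.mem_erase.mpr ⟨fun h => htB (h ▸ htI), hIP⟩, htI⟩

lemma part_insert {ι : Type*} [DecidableEq ι] {n : ℕ} {S : Finset ι}
    {Q : Finset (Finset ι)} {B : Finset ι} {a : ι} (hBS : B ⊆ S) (haB : a ∈ B)
    (hQ : IsPartitionInto n (S \ B) Q) : B ∉ Q ∧ IsPartitionInto (n+1) S (insert B Q) := by
  obtain ⟨hc, hne, hdisj, hsup⟩ := hQ
  have hsub : ∀ I ∈ Q, I ⊆ S \ B := fun I hI => hsup ▸ Finset.le_sup (f := id) hI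
  have hBQ : B ∉ Q := by
    intro h
    exact (Finset.mem_sdiff.mp (hsub B h haB)).2 haB
  refine ⟨hBQ, ?_, ?_, ?_, ?_⟩
  · rw [Finset.card_insert_of_notMem hBQ, hc]
  · intro h
    rcases Finset.mem_insert.mp h with h | h
    · exact (Finset.nonempty_iff_ne_empty.mp ⟨a, haB⟩) h.symm
    · exact hne h
  · intro I hI J hJ hIJ
    rcases Finset.mem_insert.mp hI with rfl | hI'
    · rcases Finset.mem_insert.mp hJ with rfl | hJ'
      · exact absurd rfl hIJ
      · exact (Finset.disjoint_sdiff.mono_right (hsub J hJ'))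
    · rcases Finset.mem_insert.mp hJ with rfl | hJ'
      · exact (Finset.disjoint_sdiff.mono_right (hsub I hI')).symm
      · exact hdisj I hI' J hJ' hIJ
  · rw [Finset.sup_insert, hsup]
    show B ∪ (S \ B) = S
    exact Finset.union_sdiff_of_subset hBS

lemma part_rec {ι : Type*} [DecidableEq ι] [Fintype ι] (z : ι → ℂ) {p : ℕ}
    {S : Finset ι} {a : ι} (ha : a ∈ S) :
    ∑ P ∈ Finset.univ.filter (IsPartitionInto (p+1) S),
        ∏ I ∈ P, (∑ i ∈ I, z i) ^ (I.card - 1)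
    = ∑ B ∈ S.powerset.filter (fun B => a ∈ B),
        (∑ i ∈ B, z i) ^ (B.card - 1) *
          ∑ Q ∈ Finset.univ.filter (IsPartitionInto p (S \ B)),
            ∏ I ∈ Q, (∑ i ∈ I, z i) ^ (I.card - 1) := by
  have hms : ∀ B ∈ S.powerset.filter (fun B => a ∈ B),
      (∑ i ∈ B, z i) ^ (B.card - 1) *
        ∑ Q ∈ Finset.univ.filter (IsPartitionInto p (S \ B)),
          ∏ I ∈ Q, (∑ i ∈ I, z i) ^ (I.card - 1)
      = ∑ Q ∈ Finset.univ.filter (IsPartitionInto p (S \ B)),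
          (∑ i ∈ B, z i) ^ (B.card - 1) * ∏ I ∈ Q, (∑ i ∈ I, z i) ^ (I.card - 1) :=
    fun B _ => Finset.mul_sum _ _ _
  rw [Finset.sum_congr rfl hms, ← Finset.sum_sigma
    (S.powerset.filter (fun B => a ∈ B))
    (fun B => Finset.univ.filter (IsPartitionInto p (S \ B)))
    (fun x => (∑ i ∈ x.1, z i) ^ (x.1.card - 1) *
      ∏ I ∈ x.2, (∑ i ∈ I, z i) ^ (I.card - 1))]
  apply Finset.sum_nbij'
    (fun P => (⟨(P.filter (fun I => a ∈ I)).sup id,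
      P.erase ((P.filter (fun I => a ∈ I)).sup id)⟩ :
        (_ : Finset ι) × Finset (Finset ι)))
    (fun x => insert x.1 x.2)
  · intro P hP
    have hP' : IsPartitionInto (p+1) S P := (Finset.mem_filter.mp hP).2
    obtain ⟨B, hBP, haB, hblk⟩ := blk_spec hP' ha
    obtain ⟨hBS, hQ⟩ := part_erase hP' hBP
    rw [Finset.mem_sigma, hblk]
    exact ⟨Finset.mem_filter.mpr ⟨Finset.mem_powerset.mpr hBS, haB⟩,
      Finset.mem_filter.mpr ⟨Finset.mem_univ _, hQ⟩⟩
  · rintro ⟨B, Q⟩ hx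
    rw [Finset.mem_sigma] at hx
    obtain ⟨hB, hQ⟩ := hx
    rw [Finset.mem_filter, Finset.mem_powerset] at hB
    have hQ' : IsPartitionInto p (S \ B) Q := (Finset.mem_filter.mp hQ).2
    obtain ⟨hBQ, hpart⟩ := part_insert hB.1 hB.2 hQ'
    exact Finset.mem_filter.mpr ⟨Finset.mem_univ _, hpart⟩
  · intro P hP
    have hP' : IsPartitionInto (p+1) S P := (Finset.mem_filter.mp hP).2
    obtain ⟨B, hBP, haB, hblk⟩ := blk_spec hP' ha
    simp only [hblk]
    exact Finset.insert_erase hBP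
  · rintro ⟨B, Q⟩ hx
    rw [Finset.mem_sigma] at hx
    obtain ⟨hB, hQ⟩ := hx
    rw [Finset.mem_filter, Finset.mem_powerset] at hB
    have hQ' : IsPartitionInto p (S \ B) Q := (Finset.mem_filter.mp hQ).2
    obtain ⟨hBQ, hpart⟩ := part_insert hB.1 hB.2 hQ'
    obtain ⟨B', hB'mem, haB', hblk'⟩ := blk_spec hpart ha
    have hBB' : B' = B := by
      rcases Finset.mem_insert.mp hB'mem with rfl | h
      · rfl
      · exfalso
        have hsub : B' ⊆ S \ B :=
          hQ'.2.2.2 ▸ Finset.le_sup (f := id) h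
        exact (Finset.mem_sdiff.mp (hsub haB')).2 hB.2
    simp only [hblk', hBB', Finset.erase_insert hBQ]
  · intro P hP
    have hP' : IsPartitionInto (p+1) S P := (Finset.mem_filter.mp hP).2
    obtain ⟨B, hBP, haB, hblk⟩ := blk_spec hP' ha
    simp only [hblk]
    exact (Finset.mul_prod_erase P _ hBP).symm

lemma gen {ι : Type*} [DecidableEq ι] [Fintype ι] (z : ι → ℂ) :
    ∀ (p : ℕ), 1 ≤ p → ∀ (S : Finset ι), p ≤ S.card →
      ∑ P ∈ Finset.univ.filter (IsPartitionInto p S),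
          ∏ I ∈ P, (∑ i ∈ I, z i) ^ (I.card - 1)
      = ((S.card - 1).choose (p - 1) : ℂ) * (∑ i ∈ S, z i) ^ (S.card - p) := by
  intro p
  induction p with
  | zero => exact fun h => absurd h (by omega)
  | succ p IH =>
    intro _ S hpS
    rcases Nat.eq_zero_or_pos p with rfl | hp
    · have hS : S.Nonempty := Finset.card_pos.mp (by omega)
      have hfe : Finset.univ.filter (IsPartitionInto 1 S) = {({S} : Finset (Finset ι))} := by
        ext P
        simp only [Finset.mem_filter, Finset.mem_univ, true_and, Finset.mem_singleton]
        exact part_one hS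
      rw [hfe, Finset.sum_singleton, Finset.prod_singleton]
      simp
    · have hS : S.Nonempty := Finset.card_pos.mp (by omega)
      obtain ⟨a, ha⟩ := hS
      rw [part_rec z ha]
      set q := p - 1 with hq
      set U := S.erase a with hU
      have hcu : U.card = S.card - 1 := Finset.card_erase_of_mem ha
      have hgx : z a + ∑ i ∈ U, z i = ∑ i ∈ S, z i := Finset.add_sum_erase S z ha
      have hinner : ∀ B ∈ S.powerset.filter (fun B => a ∈ B),
          (∑ i ∈ B, z i) ^ (B.card - 1) *
            ∑ Q ∈ Finset.univ.filter (IsPartitionInto p (S \ B)),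
              ∏ I ∈ Q, (∑ i ∈ I, z i) ^ (I.card - 1)
          = (∑ i ∈ B, z i) ^ (B.card - 1) *
              (if p ≤ (S \ B).card then
                ((((S \ B).card - 1).choose (p - 1) : ℕ) : ℂ) *
                  (∑ i ∈ S \ B, z i) ^ ((S \ B).card - p) else 0) := by
        intro B _
        congr 1
        by_cases hc : p ≤ (S \ B).card
        · rw [if_pos hc]
          exact IH hp (S \ B) hc
        · rw [if_neg hc]
          apply Finset.sum_eq_zero
          intro Q hQ
          exact absurd (part_card_le (Finset.mem_filter.mp hQ).2) hc
      rw [Finset.sum_congr rfl hinner]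
      have hSmem : S ∈ S.powerset.filter (fun B => a ∈ B) :=
        Finset.mem_filter.mpr ⟨Finset.mem_powerset.mpr (Finset.Subset.refl S), ha⟩
      rw [← Finset.sum_erase_add _ _ hSmem]
      have hzero : (∑ i ∈ S, z i) ^ (S.card - 1) *
          (if p ≤ (S \ S).card then
            ((((S \ S).card - 1).choose (p - 1) : ℕ) : ℂ) *
              (∑ i ∈ S \ S, z i) ^ ((S \ S).card - p) else 0) = 0 := by
        rw [Finset.sdiff_self, if_neg (by simp; omega), mul_zero]
      rw [hzero, add_zero]
      have hre : ∑ B ∈ (S.powerset.filter (fun B => a ∈ B)).erase S,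
          (∑ i ∈ B, z i) ^ (B.card - 1) *
            (if p ≤ (S \ B).card then
              ((((S \ B).card - 1).choose (p - 1) : ℕ) : ℂ) *
                (∑ i ∈ S \ B, z i) ^ ((S \ B).card - p) else 0)
          = ∑ T ∈ U.powerset.filter (· ≠ U),
              (z a + ∑ i ∈ T, z i) ^ T.card *
                ((∑ i ∈ U \ T, z i) ^ ((U \ T).card - 1 - q) *
                  (((U \ T).card - 1).choose q : ℕ)) := by
        apply Finset.sum_nbij' (fun B => B.erase a) (fun T => insert a T)
        · intro B hB
          rw [Finset.mem_erase] at hB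
          obtain ⟨hBne, hB2⟩ := hB
          rw [Finset.mem_filter, Finset.mem_powerset] at hB2
          rw [Finset.mem_filter, Finset.mem_powerset]
          constructor
          · exact Finset.erase_subset_erase a hB2.1
          · intro h
            apply hBne
            have := congrArg (insert a) h
            rwa [Finset.insert_erase hB2.2, hU, Finset.insert_erase ha] at this
        · intro T hT
          rw [Finset.mem_filter, Finset.mem_powerset] at hT
          have haT : a ∉ T := fun h => Finset.notMem_erase a S (hU ▸ hT.1 h)
          rw [Finset.mem_erase, Finset.mem_filter, Finset.mem_powerset]
          refine ⟨?_, ?_, Finset.mem_insert_self a T⟩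
          · intro h
            apply hT.2
            have := congrArg (fun W => Finset.erase W a) h
            rwa [Finset.erase_insert haT, ← hU] at this
          · intro t ht
            rcases Finset.mem_insert.mp ht with rfl | ht'
            · exact ha
            · exact Finset.erase_subset a S (hU ▸ hT.1 ht')
        · intro B hB
          rw [Finset.mem_erase] at hB
          exact Finset.insert_erase (Finset.mem_filter.mp hB.2).2
        · intro T hT
          rw [Finset.mem_filter, Finset.mem_powerset] at hT
          have haT : a ∉ T := fun h => Finset.notMem_erase a S (hU ▸ hT.1 h)
          exact Finset.erase_insert haT
        · intro B hB
          rw [Finset.mem_erase] at hB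
          obtain ⟨hBne, hB2⟩ := hB
          rw [Finset.mem_filter, Finset.mem_powerset] at hB2
          obtain ⟨hBS, haB⟩ := hB2
          have h1 : z a + ∑ i ∈ B.erase a, z i = ∑ i ∈ B, z i :=
            Finset.add_sum_erase B z haB
          have h2 : (B.erase a).card = B.card - 1 := Finset.card_erase_of_mem haB
          have h3 : U \ B.erase a = S \ B := by
            ext t
            simp only [hU, Finset.mem_sdiff, Finset.mem_erase]
            constructor
            · rintro ⟨⟨hta, htS⟩, htB⟩
              exact ⟨htS, fun h => htB ⟨hta, h⟩⟩
            · rintro ⟨htS, htB⟩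
              have hta : t ≠ a := fun h => htB (h ▸ haB)
              exact ⟨⟨hta, htS⟩, fun h => htB h.2⟩
          have hk : 1 ≤ (S \ B).card := by
            rw [Finset.card_sdiff_of_subset hBS]
            have : B.card < S.card := Finset.card_lt_card (Finset.ssubset_iff_subset_ne.mpr ⟨hBS, hBne⟩)
            omega
          rw [h1, h2, h3]
          by_cases hc : p ≤ (S \ B).card
          · rw [if_pos hc]
            have he1 : (S \ B).card - p = (S \ B).card - 1 - q := by omega
            have he2 : p - 1 = q := by omega
            rw [he1, he2]
            ring
          · rw [if_neg hc]
            have : ((S \ B).card - 1).choose q = 0 := by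
              apply Nat.choose_eq_zero_of_lt
              omega
            rw [this]
            simp
      rw [hre, K z U (z a) q]
      rw [hgx, hcu]
      have he3 : q + 1 = p := by omega
      have he4 : S.card - 1 - p = S.card - (p + 1) := by omega
      have he5 : p + 1 - 1 = p := by omega
      rw [he3, he4, he5]
      ring

end Aux

theorem combinatorial_identity (m p : ℕ) (hp : 1 ≤ p) (hpm : p ≤ m) (x : Fin m → ℂ) :
    ∑ P ∈ Finset.univ.filter (IsPartitionInto p (Finset.univ : Finset (Fin m))),
      ∏ I ∈ P, (∑ i ∈ I, x i) ^ (I.card - 1)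
      = (Nat.choose (m - 1) (p - 1) : ℂ) * (∑ i, x i) ^ (m - p) := by
  have h := gen x p hp Finset.univ
    (by rw [Finset.card_univ, Fintype.card_fin]; exact hpm)
  rwa [Finset.card_univ, Fintype.card_fin] at h
end

section
/- Let m, p be natural numbers with 2 ≤ p ≤ m, and let x_1, …, x_m be complex numbers. Then ∑_{{I_1,…,I_{p−1}} ∈ Π_{p−1}({1,…,m})} ∏_{j=1}^{p−1} (∑_{i ∈ I_j} x_i)^{|I_j| − 1} + ∑_{l=1}^{p} ∑_{{I_1,…,I_p} ∈ Π_p({1,…,m})} (∑_{i ∈ I_l} x_i)^{|I_l|} · ∏_{j ≠ l, 1 ≤ j ≤ p} (∑_{i ∈ I_j} x_i)^{|I_j| − 1} = C(m, p−1) · (∑_{i=1}^{m} x_i)^{m+1−p}. -/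
open Finset
set_option linter.unusedSectionVars false

section Core
variable {ι : Type*} [DecidableEq ι] [Fintype ι]

def PT (p : ℕ) (S : Finset ι) : Finset (Finset (Finset ι)) :=
  Finset.univ.filter (IsPartitionInto p S)

lemma mem_PT {p : ℕ} {S : Finset ι} {P : Finset (Finset ι)} :
    P ∈ PT p S ↔ IsPartitionInto p S P := by simp [PT]

lemma block_subset {p : ℕ} {S : Finset ι} {P : Finset (Finset ι)}
    (h : IsPartitionInto p S P) {I : Finset ι} (hI : I ∈ P) : I ⊆ S := by
  have := Finset.le_sup (f := id) hI
  rw [h.2.2.2] at this; exact this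

lemma block_nonempty {p : ℕ} {S : Finset ι} {P : Finset (Finset ι)}
    (h : IsPartitionInto p S P) {I : Finset ι} (hI : I ∈ P) : I.Nonempty := by
  rcases I.eq_empty_or_nonempty with rfl | h'
  · exact absurd hI h.2.1
  · exact h'

lemma sum_over_parts {M : Type*} [AddCommMonoid M] {p : ℕ} {S : Finset ι}
    {P : Finset (Finset ι)} (h : IsPartitionInto p S P) (f : ι → M) :
    ∑ I ∈ P, ∑ i ∈ I, f i = ∑ i ∈ S, f i := by
  have hd : Set.PairwiseDisjoint (↑P) (id : Finset ι → Finset ι) :=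
    fun I hI J hJ hne => h.2.2.1 I hI J hJ hne
  rw [← h.2.2.2, Finset.sup_eq_biUnion, Finset.sum_biUnion hd]; rfl

lemma sum_card_parts {p : ℕ} {S : Finset ι} {P : Finset (Finset ι)}
    (h : IsPartitionInto p S P) : ∑ I ∈ P, I.card = S.card := by
  have := sum_over_parts h (fun _ => (1 : ℕ))
  simpa using this

lemma exists_block {p : ℕ} {S : Finset ι} {P : Finset (Finset ι)}
    (h : IsPartitionInto p S P) {a : ι} (ha : a ∈ S) : ∃ B ∈ P, a ∈ B := by
  rw [← h.2.2.2] at ha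
  simpa using Finset.mem_sup.mp ha


def blockOf (a : ι) (P : Finset (Finset ι)) : Finset ι :=
  P.sup fun I => if a ∈ I then I else ∅

lemma blockOf_eq {a : ι} {P : Finset (Finset ι)} {p : ℕ} {S : Finset ι}
    (h : IsPartitionInto p S P) {B : Finset ι} (hB : B ∈ P) (haB : a ∈ B) :
    blockOf a P = B := by
  apply le_antisymm
  · apply Finset.sup_le
    intro I hI
    split_ifs with haI
    · have : I = B := by
        by_contra hne
        exact (Finset.disjoint_left.mp (h.2.2.1 I hI B hB hne)) haI haB
      exact le_of_eq this
    · exact bot_le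
  · have h2 := Finset.le_sup (f := fun I => if a ∈ I then I else ∅) hB
    have h3 : (fun I => if a ∈ I then I else (∅ : Finset ι)) B = B := by simp [haB]
    rw [if_pos haB] at h2
    exact h2

lemma blockOf_spec {a : ι} {P : Finset (Finset ι)} {p : ℕ} {S : Finset ι}
    (h : IsPartitionInto p S P) (ha : a ∈ S) :
    blockOf a P ∈ P ∧ a ∈ blockOf a P := by
  obtain ⟨B, hB, haB⟩ := exists_block h ha
  rw [blockOf_eq h hB haB]
  exact ⟨hB, haB⟩

lemma PT_card_self (S : Finset ι) :
    PT S.card S = {S.image fun i => ({i} : Finset ι)} := by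
  ext P
  rw [mem_PT, Finset.mem_singleton]
  constructor
  · rintro ⟨hc, hne, hd, hs⟩
    have hcards : ∀ I ∈ P, I.card = 1 := by
      by_contra hcon
      push_neg at hcon
      obtain ⟨I, hI, hI1⟩ := hcon
      have h2 : 2 ≤ I.card := by
        have : I.Nonempty := by
          rcases I.eq_empty_or_nonempty with rfl | h' ; exact absurd hI hne; exact h'
        have := Finset.card_pos.mpr this
        omega
      have hsum := sum_card_parts ⟨hc, hne, hd, hs⟩
      have hlt : ∑ I ∈ P, (1:ℕ) < ∑ I ∈ P, I.card := by
        apply Finset.sum_lt_sum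
        · intro J hJ
          exact Finset.card_pos.mpr (block_nonempty ⟨hc, hne, hd, hs⟩ hJ)
        · exact ⟨I, hI, by omega⟩
      simp only [Finset.sum_const, smul_eq_mul, mul_one] at hlt
      omega
    apply Finset.eq_of_subset_of_card_le
    · intro I hI
      obtain ⟨i, rfl⟩ := Finset.card_eq_one.mp (hcards I hI)
      have : i ∈ S := block_subset ⟨hc, hne, hd, hs⟩ hI (Finset.mem_singleton_self i)
      exact Finset.mem_image_of_mem _ this
    · rw [Finset.card_image_of_injective _ (fun i j hij => Finset.singleton_injective hij), hc]
  · rintro rfl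
    refine ⟨?_, ?_, ?_, ?_⟩
    · exact Finset.card_image_of_injective _ (fun i j hij => Finset.singleton_injective hij)
    · intro hmem
      simp only [Finset.mem_image] at hmem
      obtain ⟨i, _, hi⟩ := hmem
      exact Finset.singleton_ne_empty i hi
    · intro I hI J hJ hne
      simp only [Finset.mem_image] at hI hJ
      obtain ⟨i, _, rfl⟩ := hI
      obtain ⟨j, _, rfl⟩ := hJ
      rw [Finset.disjoint_singleton_left]
      simp only [Finset.mem_singleton]
      intro hij; exact hne (by rw [hij])
    · ext i
      simp only [Finset.mem_sup, Finset.mem_image, id]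
      constructor
      · rintro ⟨I, ⟨j, hj, rfl⟩, hiI⟩
        rw [Finset.mem_singleton] at hiI; rwa [hiI]
      · intro hi; exact ⟨{i}, ⟨i, hi, rfl⟩, Finset.mem_singleton_self i⟩


variable {p q : ℕ} {S : Finset ι} {a : ι} {P Q I : Finset (Finset ι)}

lemma not_mem_block {q : ℕ} {Q : Finset (Finset ι)} (hQ : IsPartitionInto q (S.erase a) Q)
    {J : Finset ι} (hJ : J ∈ Q) : a ∉ J :=
  fun haJ => (Finset.notMem_erase a S) (block_subset hQ hJ haJ)

lemma insert_singleton_part (ha : a ∈ S) {Q : Finset (Finset ι)}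
    (hQ : IsPartitionInto q (S.erase a) Q) :
    IsPartitionInto (q+1) S (insert {a} Q) ∧ {a} ∉ Q := by
  have hnotin : ({a} : Finset ι) ∉ Q := fun h => (not_mem_block hQ h) (Finset.mem_singleton_self a)
  refine ⟨⟨?_, ?_, ?_, ?_⟩, hnotin⟩
  · rw [Finset.card_insert_of_notMem hnotin, hQ.1]
  · rw [Finset.mem_insert]
    rintro (h | h)
    · exact (Finset.singleton_ne_empty a) h.symm
    · exact hQ.2.1 h
  · intro I hI J hJ hne
    rw [Finset.mem_insert] at hI hJ
    rcases hI with rfl | hI <;> rcases hJ with rfl | hJ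
    · exact absurd rfl hne
    · exact Finset.disjoint_singleton_left.mpr (not_mem_block hQ hJ)
    · exact (Finset.disjoint_singleton_left.mpr (not_mem_block hQ hI)).symm
    · exact hQ.2.2.1 I hI J hJ hne
  · rw [Finset.sup_insert, hQ.2.2.2]
    simp only [id]
    rw [Finset.sup_eq_union, ← Finset.insert_eq, Finset.insert_erase ha]

lemma erase_singleton_part (hP : IsPartitionInto p S P) (hA : {a} ∈ P) :
    IsPartitionInto (p-1) (S.erase a) (P.erase {a}) := by
  have hnot : ∀ J ∈ P.erase {a}, a ∉ J := by
    intro J hJ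
    obtain ⟨hne, hJP⟩ := Finset.mem_erase.mp hJ
    exact Finset.disjoint_singleton_left.mp (hP.2.2.1 _ hA _ hJP (Ne.symm hne))
  refine ⟨?_, ?_, ?_, ?_⟩
  · rw [Finset.card_erase_of_mem hA, hP.1]
  · intro h; exact hP.2.1 (Finset.mem_of_mem_erase h)
  · intro I hI J hJ hne
    exact hP.2.2.1 I (Finset.mem_of_mem_erase hI) J (Finset.mem_of_mem_erase hJ) hne
  · apply le_antisymm
    · apply Finset.sup_le
      intro J hJ
      exact Finset.subset_erase.mpr ⟨block_subset hP (Finset.mem_of_mem_erase hJ), hnot J hJ⟩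
    · intro i hi
      obtain ⟨hia, hiS⟩ := Finset.mem_erase.mp hi
      rw [← hP.2.2.2] at hiS
      obtain ⟨J, hJ, hiJ⟩ := Finset.mem_sup.mp hiS
      have hJne : J ≠ {a} := by
        rintro rfl
        exact hia (Finset.mem_singleton.mp hiJ)
      exact Finset.mem_sup.mpr ⟨J, Finset.mem_erase.mpr ⟨hJne, hJ⟩, hiJ⟩

lemma insert_block_part (ha : a ∈ S) {Q : Finset (Finset ι)}
    (hQ : IsPartitionInto q (S.erase a) Q) {I : Finset ι} (hI : I ∈ Q) :
    IsPartitionInto q S (insert (insert a I) (Q.erase I)) ∧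
      insert a I ∉ Q.erase I ∧ ({a} : Finset ι) ∉ insert (insert a I) (Q.erase I) := by
  have haI : a ∉ I := not_mem_block hQ hI
  have hmain : insert a I ∉ Q := by
    intro h
    exact (not_mem_block hQ h) (Finset.mem_insert_self a I)
  have hmain' : insert a I ∉ Q.erase I := fun h => hmain (Finset.mem_of_mem_erase h)
  have hIne : I.Nonempty := block_nonempty hQ hI
  refine ⟨⟨?_, ?_, ?_, ?_⟩, hmain', ?_⟩
  · rw [Finset.card_insert_of_notMem hmain', Finset.card_erase_of_mem hI, hQ.1]
    have : 1 ≤ q := by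
      rw [← hQ.1]
      exact Finset.card_pos.mpr ⟨I, hI⟩
    omega
  · rw [Finset.mem_insert]
    rintro (h | h)
    · exact (Finset.insert_ne_empty a I) h.symm
    · exact hQ.2.1 (Finset.mem_of_mem_erase h)
  · intro A hA B hB hne
    rw [Finset.mem_insert] at hA hB
    have key : ∀ J ∈ Q.erase I, Disjoint (insert a I) J := by
      intro J hJ
      obtain ⟨hJne, hJQ⟩ := Finset.mem_erase.mp hJ
      rw [Finset.disjoint_insert_left]
      exact ⟨not_mem_block hQ hJQ, hQ.2.2.1 I hI J hJQ (Ne.symm hJne)⟩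
    rcases hA with rfl | hA <;> rcases hB with rfl | hB
    · exact absurd rfl hne
    · exact key _ hB
    · exact (key _ hA).symm
    · exact hQ.2.2.1 A (Finset.mem_of_mem_erase hA) B (Finset.mem_of_mem_erase hB) hne
  · rw [Finset.sup_insert]
    simp only [id]
    have h1 : (Q.erase I).sup id = Q.sup id \ I ∨ True := Or.inr trivial
    have hsup : Q.sup id = I ∪ (Q.erase I).sup id := by
      conv_lhs => rw [← Finset.insert_erase hI]
      rw [Finset.sup_insert]
      rfl
    have : insert a I ∪ (Q.erase I).sup id = insert a (I ∪ (Q.erase I).sup id) := by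
      rw [Finset.insert_union]
    rw [Finset.sup_eq_union, this, ← hsup, hQ.2.2.2, Finset.insert_erase ha]
  · rw [Finset.mem_insert]
    rintro (h | h)
    · have : a ∈ ({a} : Finset ι) := Finset.mem_singleton_self a
      rw [h] at this
      have h2 := hIne
      obtain ⟨i, hi⟩ := h2
      have : i ∈ ({a} : Finset ι) := h ▸ Finset.mem_insert_of_mem hi
      rw [Finset.mem_singleton] at this
      exact haI (this ▸ hi)
    · have := Finset.mem_of_mem_erase h
      exact (not_mem_block hQ this) (Finset.mem_singleton_self a)


lemma erase_block_part (ha : a ∈ S) (hP : IsPartitionInto p S P)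
    (hA : ({a} : Finset ι) ∉ P) :
    (blockOf a P).erase a ∉ P.erase (blockOf a P) ∧
      IsPartitionInto p (S.erase a)
        (insert ((blockOf a P).erase a) (P.erase (blockOf a P))) := by
  obtain ⟨hB, haB⟩ := blockOf_spec hP ha
  set B := blockOf a P with hBdef
  set I := B.erase a with hIdef
  have hIsub : I ⊆ B := Finset.erase_subset a B
  have hIne : I.Nonempty := by
    rw [hIdef]
    rcases (B.erase a).eq_empty_or_nonempty with hemp | hne
    · exfalso
      apply hA
      have : B = {a} := by
        apply Finset.eq_singleton_iff_unique_mem.mpr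
        refine ⟨haB, fun i hi => ?_⟩
        by_contra hia
        exact Finset.notMem_empty i (hemp ▸ Finset.mem_erase.mpr ⟨hia, hi⟩)
      rwa [← this]
    · exact hne
  have hInot : I ∉ P.erase B := by
    intro h
    obtain ⟨hne, hIP⟩ := Finset.mem_erase.mp h
    obtain ⟨i, hi⟩ := hIne
    exact Finset.disjoint_left.mp (hP.2.2.1 I hIP B hB hne) hi (hIsub hi)
  have hkey : ∀ J ∈ P.erase B, Disjoint I J := by
    intro J hJ
    obtain ⟨hne, hJP⟩ := Finset.mem_erase.mp hJ
    exact Finset.disjoint_of_subset_left hIsub (hP.2.2.1 B hB J hJP (Ne.symm hne))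
  have hanot : ∀ J ∈ P.erase B, a ∉ J := by
    intro J hJ
    obtain ⟨hne, hJP⟩ := Finset.mem_erase.mp hJ
    exact Finset.disjoint_left.mp (hP.2.2.1 B hB J hJP (Ne.symm hne)) haB
  have hppos : 1 ≤ p := by
    rw [← hP.1]; exact Finset.card_pos.mpr ⟨B, hB⟩
  refine ⟨hInot, ?_, ?_, ?_, ?_⟩
  · rw [Finset.card_insert_of_notMem hInot, Finset.card_erase_of_mem hB, hP.1]
    omega
  · rw [Finset.mem_insert]
    rintro (h | h)
    · exact hIne.ne_empty h.symm
    · exact hP.2.1 (Finset.mem_of_mem_erase h)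
  · intro A hA' C hC hne
    rw [Finset.mem_insert] at hA' hC
    rcases hA' with rfl | hA' <;> rcases hC with rfl | hC
    · exact absurd rfl hne
    · exact hkey _ hC
    · exact (hkey _ hA').symm
    · exact hP.2.2.1 A (Finset.mem_of_mem_erase hA') C (Finset.mem_of_mem_erase hC) hne
  · rw [Finset.sup_insert, Finset.sup_eq_union]
    have hsupP : B ∪ (P.erase B).sup id = S := by
      rw [← hP.2.2.2]
      conv_rhs => rw [← Finset.insert_erase hB]
      rw [Finset.sup_insert, Finset.sup_eq_union]
      rfl
    ext i
    simp only [Finset.mem_union, Finset.mem_erase, id]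
    constructor
    · rintro (hi | hi)
      · obtain ⟨hia, hiB⟩ := Finset.mem_erase.mp hi
        refine ⟨hia, ?_⟩
        rw [← hsupP]
        exact Finset.mem_union_left _ hiB
      · refine ⟨?_, ?_⟩
        · intro rfl'
          obtain ⟨J, hJ, haJ⟩ := Finset.mem_sup.mp hi
          exact hanot J hJ (rfl' ▸ haJ)
        · rw [← hsupP]
          exact Finset.mem_union_right _ hi
    · rintro ⟨hia, hiS⟩
      rw [← hsupP] at hiS
      rcases Finset.mem_union.mp hiS with hi | hi
      · exact Or.inl (Finset.mem_erase.mpr ⟨hia, hi⟩)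
      · exact Or.inr hi


lemma sum_update_not_mem {J : Finset ι} {j : ι} (hj : j ∉ J) (x : ι → ℂ) (t : ℂ) :
    ∑ i ∈ J, Function.update x j t i = ∑ i ∈ J, x i := by
  apply Finset.sum_congr rfl
  intro i hi
  rw [Function.update_apply, if_neg]
  rintro rfl
  exact hj hi

lemma sum_update_mem {J : Finset ι} {j : ι} (hj : j ∈ J) (x : ι → ℂ) (t : ℂ) :
    ∑ i ∈ J, Function.update x j (x j + t) i = t + ∑ i ∈ J, x i := by
  rw [Finset.sum_update_of_mem hj, ← Finset.add_sum_erase J x hj,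
    Finset.sdiff_singleton_eq_erase]
  ring

lemma wt_update_block {T : Finset ι} {Q : Finset (Finset ι)} {q : ℕ}
    (hQ : IsPartitionInto q T Q) {I : Finset ι} (hI : I ∈ Q) {j : ι} (hj : j ∈ I)
    (x : ι → ℂ) (t : ℂ) :
    ∏ J ∈ Q, (∑ i ∈ J, Function.update x j (x j + t) i) ^ (J.card - 1)
      = (t + ∑ i ∈ I, x i) ^ (I.card - 1) *
          ∏ J ∈ Q.erase I, (∑ i ∈ J, x i) ^ (J.card - 1) := by
  rw [← Finset.mul_prod_erase Q _ hI, sum_update_mem hj]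
  congr 1
  apply Finset.prod_congr rfl
  intro J hJ
  obtain ⟨hne, hJQ⟩ := Finset.mem_erase.mp hJ
  have hjJ : j ∉ J := fun h =>
    Finset.disjoint_left.mp (hQ.2.2.1 I hI J hJQ (Ne.symm hne)) hj h
  rw [sum_update_not_mem hjJ]


lemma part1_sum (ha : a ∈ S) (x : ι → ℂ) (t : ℂ) (p : ℕ) :
    ∑ P ∈ (PT (p+1) S).filter (fun P => ({a} : Finset ι) ∈ P),
        ∏ J ∈ P, (∑ i ∈ J, Function.update x a t i) ^ (J.card - 1)
      = ∑ Q ∈ PT p (S.erase a), ∏ J ∈ Q, (∑ i ∈ J, x i) ^ (J.card - 1) := by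
  apply Finset.sum_nbij' (fun P => P.erase {a}) (fun Q => insert {a} Q)
  · intro P hP
    obtain ⟨hP, hA⟩ := Finset.mem_filter.mp hP
    rw [mem_PT] at hP ⊢
    have := erase_singleton_part hP hA
    simpa using this
  · intro Q hQ
    rw [mem_PT] at hQ
    obtain ⟨hpart, hnotin⟩ := insert_singleton_part ha hQ
    rw [Finset.mem_filter, mem_PT]
    exact ⟨hpart, Finset.mem_insert_self _ _⟩
  · intro P hP
    obtain ⟨_, hA⟩ := Finset.mem_filter.mp hP
    exact Finset.insert_erase hA
  · intro Q hQ
    rw [mem_PT] at hQ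
    exact Finset.erase_insert (insert_singleton_part ha hQ).2
  · intro P hP
    obtain ⟨hP', hA⟩ := Finset.mem_filter.mp hP
    rw [mem_PT] at hP'
    have hQpart := erase_singleton_part hP' hA
    rw [← Finset.mul_prod_erase P _ hA]
    have h1 : (∑ i ∈ ({a} : Finset ι), Function.update x a t i) ^
        (({a} : Finset ι).card - 1) = 1 := by
      rw [Finset.card_singleton]
      norm_num
    rw [h1, one_mul]
    apply Finset.prod_congr rfl
    intro J hJ
    have hpm1 : p + 1 - 1 = p := rfl
    rw [sum_update_not_mem (not_mem_block (q := p+1-1) hQpart hJ)]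

lemma part2_sum (ha : a ∈ S) (x : ι → ℂ) (t : ℂ) (p : ℕ) :
    ∑ P ∈ (PT p S).filter (fun P => ({a} : Finset ι) ∉ P),
        ∏ J ∈ P, (∑ i ∈ J, Function.update x a t i) ^ (J.card - 1)
      = ∑ Q ∈ PT p (S.erase a), ∑ I ∈ Q,
          (t + ∑ i ∈ I, x i) ^ I.card *
            ∏ J ∈ Q.erase I, (∑ i ∈ J, x i) ^ (J.card - 1) := by
  conv_rhs => rw [Finset.sum_sigma' (PT p (S.erase a)) (fun Q => Q)
    (fun Q I => (t + ∑ i ∈ I, x i) ^ I.card *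
      ∏ J ∈ Q.erase I, (∑ i ∈ J, x i) ^ (J.card - 1))]
  apply Finset.sum_nbij'
    (fun P => (⟨insert ((blockOf a P).erase a) (P.erase (blockOf a P)),
      (blockOf a P).erase a⟩ : Σ _ : Finset (Finset ι), Finset ι))
    (fun z => insert (insert a z.2) (z.1.erase z.2))
  · intro P hP
    obtain ⟨hP', hA⟩ := Finset.mem_filter.mp hP
    rw [mem_PT] at hP'
    obtain ⟨hInot, hpart⟩ := erase_block_part ha hP' hA
    rw [Finset.mem_sigma, mem_PT]
    exact ⟨hpart, Finset.mem_insert_self _ _⟩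
  · rintro ⟨Q, I⟩ hz
    rw [Finset.mem_sigma, mem_PT] at hz
    obtain ⟨hQ, hI⟩ := hz
    obtain ⟨hpart, _, hA⟩ := insert_block_part ha hQ hI
    rw [Finset.mem_filter, mem_PT]
    exact ⟨hpart, hA⟩
  · intro P hP
    obtain ⟨hP', hA⟩ := Finset.mem_filter.mp hP
    rw [mem_PT] at hP'
    obtain ⟨hB, haB⟩ := blockOf_spec hP' ha
    obtain ⟨hInot, hpart⟩ := erase_block_part ha hP' hA
    simp only []
    rw [Finset.insert_erase haB, Finset.erase_insert hInot, Finset.insert_erase hB]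
  · rintro ⟨Q, I⟩ hz
    rw [Finset.mem_sigma, mem_PT] at hz
    obtain ⟨hQ, hI⟩ := hz
    obtain ⟨hpart, hmain', hA⟩ := insert_block_part ha hQ hI
    have haI : a ∉ I := not_mem_block hQ hI
    have hblock : blockOf a (insert (insert a I) (Q.erase I)) = insert a I :=
      blockOf_eq hpart (Finset.mem_insert_self _ _) (Finset.mem_insert_self a I)
    dsimp only at hmain' ⊢
    rw [hblock, Finset.erase_insert haI, Finset.erase_insert hmain',
      Finset.insert_erase hI]
  · intro P hP
    obtain ⟨hP', hA⟩ := Finset.mem_filter.mp hP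
    rw [mem_PT] at hP'
    obtain ⟨hB, haB⟩ := blockOf_spec hP' ha
    obtain ⟨hInot, hpart⟩ := erase_block_part ha hP' hA
    set B := blockOf a P
    set I0 := B.erase a with hI0
    have haI0 : a ∉ I0 := Finset.notMem_erase a B
    rw [← Finset.mul_prod_erase P _ hB]
    simp only []
    rw [Finset.erase_insert hInot]
    congr 1
    · have hsum : ∑ i ∈ B, Function.update x a t i = t + ∑ i ∈ I0, x i := by
        conv_lhs => rw [← Finset.insert_erase haB]
        rw [Finset.sum_insert haI0, Function.update_self, sum_update_not_mem haI0]
      have hcard : B.card - 1 = I0.card := by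
        rw [hI0, Finset.card_erase_of_mem haB]
      rw [hsum, hcard]
    · apply Finset.prod_congr rfl
      intro J hJ
      have hJ' : J ∈ insert I0 (P.erase B) := Finset.mem_insert_of_mem hJ
      rw [sum_update_not_mem (not_mem_block hpart hJ')]


lemma PT_zero {S : Finset ι} (hS : S.Nonempty) : PT 0 S = ∅ := by
  ext P
  simp only [mem_PT, Finset.notMem_empty, iff_false]
  rintro ⟨hc, -, -, hs⟩
  rw [Finset.card_eq_zero] at hc
  subst hc
  simp only [Finset.sup_empty] at hs
  exact hS.ne_empty (by rw [← hs]; rfl)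

lemma B0_perQ {T : Finset ι} {q : ℕ} {Q : Finset (Finset ι)}
    (hQ : IsPartitionInto q T Q) (x : ι → ℂ) :
    ∑ I ∈ Q, (∑ i ∈ I, x i) ^ I.card * ∏ J ∈ Q.erase I, (∑ i ∈ J, x i) ^ (J.card - 1)
      = (∑ i ∈ T, x i) * ∏ J ∈ Q, (∑ i ∈ J, x i) ^ (J.card - 1) := by
  rw [← sum_over_parts hQ x, Finset.sum_mul]
  apply Finset.sum_congr rfl
  intro I hI
  have hc : I.card - 1 + 1 = I.card :=
    Nat.succ_pred_eq_of_pos (Finset.card_pos.mpr (block_nonempty hQ hI))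
  rw [← Finset.mul_prod_erase Q _ hI, ← mul_assoc, ← pow_succ', hc]

lemma derivB_perQ {T : Finset ι} {q : ℕ} {Q : Finset (Finset ι)}
    (hQ : IsPartitionInto q T Q) (x : ι → ℂ) (t : ℂ) :
    ∑ I ∈ Q, (I.card : ℂ) *
        ((t + ∑ i ∈ I, x i) ^ (I.card - 1) * ∏ J ∈ Q.erase I, (∑ i ∈ J, x i) ^ (J.card - 1))
      = ∑ j ∈ T, ∏ J ∈ Q, (∑ i ∈ J, Function.update x j (x j + t) i) ^ (J.card - 1) := by
  have hd : Set.PairwiseDisjoint (↑Q) (id : Finset ι → Finset ι) :=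
    fun I hI J hJ hne => hQ.2.2.1 I hI J hJ hne
  rw [← hQ.2.2.2, Finset.sup_eq_biUnion, Finset.sum_biUnion hd]
  apply Finset.sum_congr rfl
  intro I hI
  have : ∀ j ∈ (id I : Finset ι),
      ∏ J ∈ Q, (∑ i ∈ J, Function.update x j (x j + t) i) ^ (J.card - 1)
        = (t + ∑ i ∈ I, x i) ^ (I.card - 1) *
            ∏ J ∈ Q.erase I, (∑ i ∈ J, x i) ^ (J.card - 1) := by
    intro j hj
    exact wt_update_block hQ hI hj x t
  rw [Finset.sum_congr rfl this, Finset.sum_const, nsmul_eq_mul]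
  rfl


lemma nat_choose_mul {N k : ℕ} (hN : 1 ≤ N) :
    (N - k) * Nat.choose N k = N * Nat.choose (N - 1) k := by
  obtain ⟨M, rfl⟩ : ∃ M, N = M + 1 := ⟨N - 1, by omega⟩
  rw [Nat.add_sub_cancel]
  rw [mul_comm (M + 1 - k) _, mul_comm (M + 1) _, Nat.choose_mul_succ_eq]

lemma eq_of_hasDerivAt_eq {f g d : ℂ → ℂ} (hf : ∀ t, HasDerivAt f (d t) t)
    (hg : ∀ t, HasDerivAt g (d t) t) (h0 : f 0 = g 0) (t : ℂ) : f t = g t := by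
  have key : ∀ u v : ℂ, (fun y => f y - g y) u = (fun y => f y - g y) v := by
    apply is_const_of_deriv_eq_zero
    · intro y
      exact ((hf y).sub (hg y)).differentiableAt
    · intro y
      have h := ((hf y).sub (hg y)).deriv
      simp at h; exact h
  have h2 := key t 0
  simp only at h2
  rw [h0] at h2
  simpa [sub_eq_zero] using h2


theorem core (n : ℕ) : ∀ S : Finset ι, S.card = n → ∀ p : ℕ, 1 ≤ p → p ≤ n →
    ∀ x : ι → ℂ,
    ∑ P ∈ PT p S, ∏ J ∈ P, (∑ i ∈ J, x i) ^ (J.card - 1)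
      = (Nat.choose (n - 1) (p - 1) : ℂ) * (∑ i ∈ S, x i) ^ (n - p) := by
  induction n using Nat.strong_induction_on with
  | _ n IH =>
  intro S hS p hp1 hpn x
  rcases eq_or_lt_of_le hpn with hpe | hlt
  · subst hpe
    rw [← hS, PT_card_self, Finset.sum_singleton, Nat.sub_self, pow_zero, Nat.choose_self,
      Nat.cast_one, one_mul]
    apply Finset.prod_eq_one
    intro J hJ
    obtain ⟨i, -, rfl⟩ := Finset.mem_image.mp hJ
    rw [Finset.card_singleton]
    norm_num
  · have hn1 : 1 ≤ n := le_trans hp1 (le_of_lt hlt)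
    have hSne : S.Nonempty := Finset.card_pos.mp (by rw [hS]; omega)
    obtain ⟨a, ha⟩ := hSne
    have hS'card : (S.erase a).card = n - 1 := by rw [Finset.card_erase_of_mem ha, hS]
    have hS'ne : (S.erase a).Nonempty := Finset.card_pos.mp (by rw [hS'card]; omega)
    have IHp : ∀ y : ι → ℂ,
        ∑ Q ∈ PT p (S.erase a), ∏ J ∈ Q, (∑ i ∈ J, y i) ^ (J.card - 1)
          = (Nat.choose (n - 1 - 1) (p - 1) : ℂ) * (∑ i ∈ S.erase a, y i) ^ (n - 1 - p) :=
      fun y => IH (n - 1) (by omega) (S.erase a) hS'card p hp1 (by omega) y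
    have hA : ∑ Q ∈ PT (p - 1) (S.erase a), ∏ J ∈ Q, (∑ i ∈ J, x i) ^ (J.card - 1)
        = (Nat.choose (n - 1) (p - 1) : ℂ) * (∑ i ∈ S.erase a, x i) ^ (n - p)
          - (Nat.choose (n - 1 - 1) (p - 1) : ℂ) * (∑ i ∈ S.erase a, x i) ^ (n - p) := by
      rcases eq_or_lt_of_le hp1 with hp1e | hp2
      · rw [← hp1e, PT_zero hS'ne]
        simp
      · have h := IH (n - 1) (by omega) (S.erase a) hS'card (p - 1) (by omega) (by omega) x
        rw [h, show n - 1 - (p - 1) = n - p from by omega]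
        have hpas : (Nat.choose (n - 1 - 1) (p - 1 - 1) : ℂ)
            = (Nat.choose (n - 1) (p - 1) : ℂ) - (Nat.choose (n - 1 - 1) (p - 1) : ℂ) := by
          have hnat : Nat.choose (n - 1) (p - 1)
              = Nat.choose (n - 1 - 1) (p - 1 - 1) + Nat.choose (n - 1 - 1) (p - 1) := by
            rw [show n - 1 = (n - 1 - 1) + 1 from by omega, Nat.add_sub_cancel]
            rw [show p - 1 = (p - 1 - 1) + 1 from by omega, Nat.add_sub_cancel]
            exact Nat.choose_succ_succ _ _
          rw [hnat]
          push_cast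
          ring
        rw [hpas]
        ring
    have key : ∀ t : ℂ,
        ∑ P ∈ PT p S, ∏ J ∈ P, (∑ i ∈ J, Function.update x a t i) ^ (J.card - 1)
          = (Nat.choose (n - 1) (p - 1) : ℂ) * ((∑ i ∈ S.erase a, x i) + t) ^ (n - p) := by
      set s' := ∑ i ∈ S.erase a, x i with hs'def
      set A := ∑ Q ∈ PT (p - 1) (S.erase a), ∏ J ∈ Q, (∑ i ∈ J, x i) ^ (J.card - 1)
        with hAdef
      set B : ℂ → ℂ := fun t => ∑ Q ∈ PT p (S.erase a), ∑ I ∈ Q,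
        (t + ∑ i ∈ I, x i) ^ I.card * ∏ J ∈ Q.erase I, (∑ i ∈ J, x i) ^ (J.card - 1)
        with hBdef
      have hdecomp : ∀ t : ℂ,
          ∑ P ∈ PT p S, ∏ J ∈ P, (∑ i ∈ J, Function.update x a t i) ^ (J.card - 1)
            = A + B t := by
        intro t
        rw [← Finset.sum_filter_add_sum_filter_not (PT p S)
          (fun P => ({a} : Finset ι) ∈ P)]
        congr 1
        · rw [hAdef, show p = p - 1 + 1 from by omega]
          exact part1_sum ha x t (p - 1)
        · exact part2_sum ha x t p
      have hB0 : B 0 = (Nat.choose (n - 1 - 1) (p - 1) : ℂ) * s' ^ (n - p) := by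
        rw [hBdef]
        simp only [zero_add]
        have hcong : ∀ Q ∈ PT p (S.erase a),
            ∑ I ∈ Q, (∑ i ∈ I, x i) ^ I.card *
              ∏ J ∈ Q.erase I, (∑ i ∈ J, x i) ^ (J.card - 1)
              = (∑ i ∈ S.erase a, x i) * ∏ J ∈ Q, (∑ i ∈ J, x i) ^ (J.card - 1) :=
          fun Q hQ => B0_perQ (mem_PT.mp hQ) x
        rw [Finset.sum_congr rfl hcong, ← Finset.mul_sum, IHp x]
        rw [show ((∑ i ∈ S.erase a, x i)) = s' from rfl]
        calc s' * ((Nat.choose (n - 1 - 1) (p - 1) : ℂ) * s' ^ (n - 1 - p))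
            = (Nat.choose (n - 1 - 1) (p - 1) : ℂ) * (s' * s' ^ (n - 1 - p)) := by ring
          _ = (Nat.choose (n - 1 - 1) (p - 1) : ℂ) * s' ^ (n - p) := by
              rw [← pow_succ', show n - 1 - p + 1 = n - p from by omega]
      have hderivB : ∀ t : ℂ, HasDerivAt B
          (((n - 1 : ℕ) : ℂ) * ((Nat.choose (n - 1 - 1) (p - 1) : ℂ)
            * (s' + t) ^ (n - 1 - p))) t := by
        intro t
        have h1 : HasDerivAt B (∑ Q ∈ PT p (S.erase a), ∑ I ∈ Q,
            (I.card : ℂ) * ((t + ∑ i ∈ I, x i) ^ (I.card - 1) *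
              ∏ J ∈ Q.erase I, (∑ i ∈ J, x i) ^ (J.card - 1))) t := by
          rw [hBdef]
          apply HasDerivAt.fun_sum
          intro Q hQ
          apply HasDerivAt.fun_sum
          intro I hI
          have h : HasDerivAt (fun y => (y + ∑ i ∈ I, x i) ^ I.card *
              ∏ J ∈ Q.erase I, (∑ i ∈ J, x i) ^ (J.card - 1))
              ((I.card : ℂ) * (t + ∑ i ∈ I, x i) ^ (I.card - 1) * 1 *
                ∏ J ∈ Q.erase I, (∑ i ∈ J, x i) ^ (J.card - 1)) t :=
            (((hasDerivAt_id t).add_const (∑ i ∈ I, x i)).pow I.card).mul_const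
            (∏ J ∈ Q.erase I, (∑ i ∈ J, x i) ^ (J.card - 1))
          exact h.congr_deriv (by ring)
        have h2 : (∑ Q ∈ PT p (S.erase a), ∑ I ∈ Q,
            (I.card : ℂ) * ((t + ∑ i ∈ I, x i) ^ (I.card - 1) *
              ∏ J ∈ Q.erase I, (∑ i ∈ J, x i) ^ (J.card - 1)))
            = ((n - 1 : ℕ) : ℂ) * ((Nat.choose (n - 1 - 1) (p - 1) : ℂ)
              * (s' + t) ^ (n - 1 - p)) := by
          have hq : ∀ Q ∈ PT p (S.erase a),
              ∑ I ∈ Q, (I.card : ℂ) * ((t + ∑ i ∈ I, x i) ^ (I.card - 1) *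
                ∏ J ∈ Q.erase I, (∑ i ∈ J, x i) ^ (J.card - 1))
                = ∑ j ∈ S.erase a, ∏ J ∈ Q,
                    (∑ i ∈ J, Function.update x j (x j + t) i) ^ (J.card - 1) :=
            fun Q hQ => derivB_perQ (mem_PT.mp hQ) x t
          rw [Finset.sum_congr rfl hq, Finset.sum_comm]
          have hj : ∀ j ∈ S.erase a,
              ∑ Q ∈ PT p (S.erase a), ∏ J ∈ Q,
                  (∑ i ∈ J, Function.update x j (x j + t) i) ^ (J.card - 1)
                = (Nat.choose (n - 1 - 1) (p - 1) : ℂ) * (s' + t) ^ (n - 1 - p) := by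
            intro j hj
            rw [IHp (Function.update x j (x j + t)), sum_update_mem hj x t]
            rw [show t + s' = s' + t from by ring]
          rw [Finset.sum_congr rfl hj, Finset.sum_const, nsmul_eq_mul, hS'card]
        exact h2 ▸ h1
      have hderivG : ∀ t : ℂ, HasDerivAt
          (fun u => (Nat.choose (n - 1) (p - 1) : ℂ) * (s' + u) ^ (n - p))
          (((n - 1 : ℕ) : ℂ) * ((Nat.choose (n - 1 - 1) (p - 1) : ℂ)
            * (s' + t) ^ (n - 1 - p))) t := by
        intro t
        have h : HasDerivAt (fun u => (Nat.choose (n - 1) (p - 1) : ℂ) * (s' + u) ^ (n - p))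
            ((Nat.choose (n - 1) (p - 1) : ℂ) * (((n - p : ℕ) : ℂ) * (s' + t) ^ (n - p - 1) * 1)) t :=
          (((hasDerivAt_id t).const_add s').pow (n - p)).const_mul
          ((Nat.choose (n - 1) (p - 1) : ℂ))
        convert h using 1
        rw [show n - p - 1 = n - 1 - p from by omega]
        have hnat : (n - p) * Nat.choose (n - 1) (p - 1)
            = (n - 1) * Nat.choose (n - 1 - 1) (p - 1) := by
          have h3 := nat_choose_mul (N := n - 1) (k := p - 1) (by omega)
          rwa [show n - 1 - (p - 1) = n - p from by omega] at h3
        have hcast : ((n - p : ℕ) : ℂ) * (Nat.choose (n - 1) (p - 1) : ℂ)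
            = ((n - 1 : ℕ) : ℂ) * (Nat.choose (n - 1 - 1) (p - 1) : ℂ) := by
          exact_mod_cast congrArg (Nat.cast (R := ℂ)) hnat
        calc ((n - 1 : ℕ) : ℂ) * ((Nat.choose (n - 1 - 1) (p - 1) : ℂ)
              * (s' + t) ^ (n - 1 - p))
            = (((n - 1 : ℕ) : ℂ) * (Nat.choose (n - 1 - 1) (p - 1) : ℂ))
              * (s' + t) ^ (n - 1 - p) := by ring
          _ = (((n - p : ℕ) : ℂ) * (Nat.choose (n - 1) (p - 1) : ℂ))
              * (s' + t) ^ (n - 1 - p) := by rw [hcast]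
          _ = (Nat.choose (n - 1) (p - 1) : ℂ)
              * (((n - p : ℕ) : ℂ) * (s' + t) ^ (n - 1 - p) * 1) := by ring
      have hF0 : A + B 0 = (Nat.choose (n - 1) (p - 1) : ℂ) * (s' + 0) ^ (n - p) := by
        rw [hB0, hA, add_zero]
        ring
      intro t
      have hfun := eq_of_hasDerivAt_eq
        (f := fun u => A + B u)
        (g := fun u => (Nat.choose (n - 1) (p - 1) : ℂ) * (s' + u) ^ (n - p))
        (d := fun u => ((n - 1 : ℕ) : ℂ) * ((Nat.choose (n - 1 - 1) (p - 1) : ℂ)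
          * (s' + u) ^ (n - 1 - p)))
        (fun u => (hderivB u).const_add A) hderivG hF0 t
      rw [hdecomp t]
      exact hfun
    have hkey := key (x a)
    rw [Function.update_eq_self a x] at hkey
    rw [hkey]
    congr 2
    exact Finset.sum_erase_add S x ha

end Core


theorem identity_n_eq_zero (m p : ℕ) (hp : 2 ≤ p) (hpm : p ≤ m) (x : Fin m → ℂ) :
    (∑ P ∈ Finset.univ.filter (IsPartitionInto (p - 1) (Finset.univ : Finset (Fin m))),
        ∏ I ∈ P, (∑ i ∈ I, x i) ^ (I.card - 1))
      + ∑ P ∈ Finset.univ.filter (IsPartitionInto p (Finset.univ : Finset (Fin m))),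
          ∑ L ∈ P, (∑ i ∈ L, x i) ^ L.card * ∏ J ∈ P.erase L, (∑ i ∈ J, x i) ^ (J.card - 1)
      = (Nat.choose m (p - 1) : ℂ) * (∑ i, x i) ^ (m + 1 - p) := by
  have hcardu : (Finset.univ : Finset (Fin m)).card = m := by simp
  have h1 := core (ι := Fin m) m Finset.univ hcardu (p - 1) (by omega) (by omega) x
  have h2 := core (ι := Fin m) m Finset.univ hcardu p (by omega) hpm x
  have hinner : ∀ P ∈ PT p (Finset.univ : Finset (Fin m)),
      ∑ L ∈ P, (∑ i ∈ L, x i) ^ L.card * ∏ J ∈ P.erase L, (∑ i ∈ J, x i) ^ (J.card - 1)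
        = (∑ i, x i) * ∏ J ∈ P, (∑ i ∈ J, x i) ^ (J.card - 1) :=
    fun P hP => B0_perQ (mem_PT.mp hP) x
  show (∑ P ∈ PT (p - 1) (Finset.univ : Finset (Fin m)),
      ∏ I ∈ P, (∑ i ∈ I, x i) ^ (I.card - 1))
    + ∑ P ∈ PT p (Finset.univ : Finset (Fin m)),
        ∑ L ∈ P, (∑ i ∈ L, x i) ^ L.card * ∏ J ∈ P.erase L, (∑ i ∈ J, x i) ^ (J.card - 1)
    = (Nat.choose m (p - 1) : ℂ) * (∑ i, x i) ^ (m + 1 - p)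
  rw [h1, Finset.sum_congr rfl hinner, ← Finset.mul_sum, h2]
  rw [show m - (p - 1) = m + 1 - p from by omega]
  have hpow : (∑ i, x i) * ((Nat.choose (m - 1) (p - 1) : ℂ) * (∑ i, x i) ^ (m - p))
      = (Nat.choose (m - 1) (p - 1) : ℂ) * (∑ i, x i) ^ (m + 1 - p) := by
    calc (∑ i, x i) * ((Nat.choose (m - 1) (p - 1) : ℂ) * (∑ i, x i) ^ (m - p))
        = (Nat.choose (m - 1) (p - 1) : ℂ) * ((∑ i, x i) * (∑ i, x i) ^ (m - p)) := by ring
      _ = (Nat.choose (m - 1) (p - 1) : ℂ) * (∑ i, x i) ^ (m + 1 - p) := by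
          rw [← pow_succ', show m - p + 1 = m + 1 - p from by omega]
  rw [hpow]
  have hpas : (Nat.choose m (p - 1) : ℂ)
      = (Nat.choose (m - 1) (p - 1 - 1) : ℂ) + (Nat.choose (m - 1) (p - 1) : ℂ) := by
    have hnat : Nat.choose m (p - 1)
        = Nat.choose (m - 1) (p - 1 - 1) + Nat.choose (m - 1) (p - 1) := by
      rw [show m = (m - 1) + 1 from by omega, Nat.add_sub_cancel]
      rw [show p - 1 = (p - 1 - 1) + 1 from by omega, Nat.add_sub_cancel]
      exact Nat.choose_succ_succ _ _
    rw [hnat]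
    push_cast
    ring
  rw [hpas]
  ring
end

section
/- Let m, p, n be natural numbers with 1 ≤ p ≤ m and 1 ≤ n ≤ m+1−p, and let x_1, …, x_m be complex numbers. Then ∑_{l=1}^{p} ∑_{{I_1,…,I_p} ∈ Π_p({1,…,m}), |I_l| ≥ n} C(|I_l|, n) · (∑_{i ∈ I_l} x_i)^{|I_l| − n} · ∏_{j ≠ l, 1 ≤ j ≤ p} (∑_{i ∈ I_j} x_i)^{|I_j| − 1} = C(m, p−1) · C(m+1−p, n) · (∑_{i=1}^{m} x_i)^{m+1−p−n}. -/
open Finset Polynomial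

variable {ι : Type} [DecidableEq ι]

/-- Abel-type weight. -/
def rho {R : Type} [CommRing R] (x : ι → R) (y : R) (T : Finset ι) : R :=
  if T = ∅ then 1 else y * (y + ∑ i ∈ T, x i) ^ (T.card - 1)

lemma rho_empty {R : Type} [CommRing R] (x : ι → R) (y : R) : rho x y (∅ : Finset ι) = 1 := by
  simp [rho]

lemma rho_of_ne {R : Type} [CommRing R] (x : ι → R) (y : R) {T : Finset ι} (h : T ≠ ∅) :
    rho x y T = y * (y + ∑ i ∈ T, x i) ^ (T.card - 1) := by
  simp [rho, h]

lemma eval_rho {R : Type} [CommRing R] (x : ι → R) (y : R) (T : Finset ι) :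
    Polynomial.eval y (rho (fun i => (C (x i) : R[X])) X T) = rho x y T := by
  unfold rho
  split
  · simp
  · simp [eval_finset_sum]

lemma derivative_rho {R : Type} [CommRing R] (x : ι → R) (T : Finset ι) :
    derivative (rho (fun i => (C (x i) : R[X])) X T)
      = ∑ b ∈ T, rho (fun i => (C (x i) : R[X])) (X + C (x b)) (T.erase b) := by
  rcases eq_or_ne T ∅ with h | h
  · simp [h, rho_empty]
  · rw [rho_of_ne _ _ h]
    have hCs : (∑ i ∈ T, (C (x i) : R[X])) = C (∑ i ∈ T, x i) := (map_sum C _ _).symm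
    rw [hCs]
    rcases Nat.exists_eq_add_of_lt (Finset.card_pos.mpr (Finset.nonempty_iff_ne_empty.mpr h)) with ⟨k, hk⟩
    rw [zero_add] at hk
    -- T.card = k + 1
    rcases Nat.eq_zero_or_pos k with hk0 | hkpos
    · -- T is a singleton
      subst hk0
      obtain ⟨b, hb⟩ := Finset.card_eq_one.mp hk
      subst hb
      simp [rho_empty]
    · -- T.card = k+1, k ≥ 1
      have h2 : T.card - 1 = k := by omega
      rw [h2, derivative_mul, derivative_X, one_mul, derivative_pow]
      have : derivative (X + C (∑ i ∈ T, x i)) = 1 := by simp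
      rw [this, mul_one]
      have hterm : ∀ b ∈ T, rho (fun i => (C (x i) : R[X])) (X + C (x b)) (T.erase b)
          = (X + C (x b)) * (X + C (∑ i ∈ T, x i)) ^ (k - 1) := by
        intro b hb
        have hne : T.erase b ≠ ∅ := by
          intro hE
          have := Finset.card_erase_of_mem hb
          rw [hE] at this
          simp at this
          omega
        rw [rho_of_ne _ _ hne]
        have h3 : (T.erase b).card = k := by rw [Finset.card_erase_of_mem hb, hk]; omega
        have h4 : x b + ∑ i ∈ T.erase b, x i = ∑ i ∈ T, x i := Finset.add_sum_erase _ _ hb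
        rw [h3]
        have h5 : (X + C (x b)) + ∑ i ∈ T.erase b, C (x i) = X + C (∑ i ∈ T, x i) := by
          rw [← h4]
          push_cast [C_add]
          rw [map_sum]
          ring
        rw [h5]
      rw [Finset.sum_congr rfl hterm, ← Finset.sum_mul]
      have h6 : ∑ b ∈ T, (X + C (x b)) = (T.card : R[X]) * X + C (∑ i ∈ T, x i) := by
        rw [Finset.sum_add_distrib, Finset.sum_const, map_sum, nsmul_eq_mul]
      rw [h6, hk]
      obtain ⟨e, he⟩ : ∃ e, k = e + 1 := ⟨k - 1, by omega⟩
      subst he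
      simp only [Nat.add_sub_cancel]
      rw [pow_succ, C_eq_natCast]
      push_cast
      ring

lemma sum_powerset_elem_swap {M : Type} [AddCommMonoid M] (S : Finset ι) (g : ι → Finset ι → M) :
    ∑ T ∈ S.powerset, ∑ b ∈ T, g b T
      = ∑ b ∈ S, ∑ T ∈ (S.erase b).powerset, g b (insert b T) := by
  rw [Finset.sum_sigma', Finset.sum_sigma']
  refine Finset.sum_nbij' (fun z => ⟨z.2, z.1.erase z.2⟩) (fun z => ⟨insert z.1 z.2, z.1⟩)
    ?_ ?_ ?_ ?_ ?_
  · rintro ⟨T, b⟩ hz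
    rw [Finset.mem_sigma] at hz ⊢
    obtain ⟨hT, hb⟩ := hz
    rw [Finset.mem_powerset] at hT
    exact ⟨hT hb, Finset.mem_powerset.mpr (Finset.erase_subset_erase _ hT)⟩
  · rintro ⟨b, T⟩ hz
    rw [Finset.mem_sigma] at hz ⊢
    obtain ⟨hb, hT⟩ := hz
    rw [Finset.mem_powerset] at hT
    constructor
    · rw [Finset.mem_powerset]
      exact Finset.insert_subset hb (hT.trans (Finset.erase_subset _ _))
    · exact Finset.mem_insert_self _ _
  · rintro ⟨T, b⟩ hz
    rw [Finset.mem_sigma] at hz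
    simp only [Sigma.mk.inj_iff, heq_eq_eq]
    exact ⟨Finset.insert_erase hz.2, trivial⟩
  · rintro ⟨b, T⟩ hz
    rw [Finset.mem_sigma] at hz
    have hbT : b ∉ T := fun hmem =>
      (Finset.mem_erase.mp (Finset.mem_powerset.mp hz.2 hmem)).1 rfl
    simp only [Sigma.mk.inj_iff, heq_eq_eq]
    exact ⟨trivial, Finset.erase_insert hbT⟩

  · rintro ⟨T, b⟩ hz
    rw [Finset.mem_sigma] at hz
    simp only
    rw [Finset.insert_erase hz.2]

lemma F_main : ∀ (n : ℕ) (S : Finset ι), S.card = n →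
    ∀ (R : Type) [CommRing R] [IsDomain R] [CharZero R], ∀ (x : ι → R) (y z : R),
    ∑ T ∈ S.powerset, rho x y T * (z + ∑ i ∈ S \ T, x i) ^ (S \ T).card
      = (y + z + ∑ i ∈ S, x i) ^ S.card := by
  intro n
  induction n with
  | zero =>
    intro S hS R _ _ _ x y z
    rw [Finset.card_eq_zero] at hS
    subst hS
    simp [rho_empty]
  | succ n IH =>
    intro S hS R _ _ _ x y z
    -- work in R[X]
    set w : R := z + ∑ i ∈ S, x i with hw
    have key : (∑ T ∈ S.powerset, rho (fun i => (C (x i) : R[X])) X T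
          * C ((z + ∑ i ∈ S \ T, x i) ^ (S \ T).card))
        = (X + C w) ^ (n + 1) := by
      have hderiv : derivative (∑ T ∈ S.powerset, rho (fun i => (C (x i) : R[X])) X T
            * C ((z + ∑ i ∈ S \ T, x i) ^ (S \ T).card))
          = derivative ((X + C w) ^ (n + 1)) := by
        rw [derivative_sum]
        have hstep : ∀ T ∈ S.powerset,
            derivative (rho (fun i => (C (x i) : R[X])) X T
              * C ((z + ∑ i ∈ S \ T, x i) ^ (S \ T).card))
            = ∑ b ∈ T, rho (fun i => (C (x i) : R[X])) (X + C (x b)) (T.erase b)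
                * C ((z + ∑ i ∈ S \ T, x i) ^ (S \ T).card) := by
          intro T _
          rw [derivative_mul, derivative_C, mul_zero, add_zero, derivative_rho,
            Finset.sum_mul]
        rw [Finset.sum_congr rfl hstep]
        rw [sum_powerset_elem_swap S (fun b T => rho (fun i => (C (x i) : R[X])) (X + C (x b)) (T.erase b)
          * C ((z + ∑ i ∈ S \ T, x i) ^ (S \ T).card))]
        have hinner : ∀ b ∈ S, (∑ T ∈ (S.erase b).powerset,
            rho (fun i => (C (x i) : R[X])) (X + C (x b)) ((insert b T).erase b)
              * C ((z + ∑ i ∈ S \ insert b T, x i) ^ (S \ insert b T).card))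
            = (X + C w) ^ n := by
          intro b hb
          have hbS' : b ∉ S.erase b := Finset.notMem_erase _ _
          have hcongr : ∀ T ∈ (S.erase b).powerset,
              rho (fun i => (C (x i) : R[X])) (X + C (x b)) ((insert b T).erase b)
                * C ((z + ∑ i ∈ S \ insert b T, x i) ^ (S \ insert b T).card)
              = rho (fun i => (C (x i) : R[X])) (X + C (x b)) T
                * ((C z) + ∑ i ∈ (S.erase b) \ T, C (x i)) ^ ((S.erase b) \ T).card := by
            intro T hT
            have hbT : b ∉ T := fun hmem =>
              (Finset.mem_erase.mp (Finset.mem_powerset.mp hT hmem)).1 rfl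
            have hset : S \ insert b T = (S.erase b) \ T := by
              ext i
              simp only [Finset.mem_sdiff, Finset.mem_insert, Finset.mem_erase]
              tauto
            rw [Finset.erase_insert hbT, hset]
            congr 1
            rw [← map_sum, ← C_add, ← C_pow]
          rw [Finset.sum_congr rfl hcongr]
          rw [IH (S.erase b) (by rw [Finset.card_erase_of_mem hb, hS]; omega) (R[X])
            (fun i => C (x i)) (X + C (x b)) (C z)]
          have hw2 : w = x b + z + ∑ i ∈ S.erase b, x i := by
            rw [hw, ← Finset.add_sum_erase _ x hb]; ring
          have hsum : X + C (x b) + C z + ∑ i ∈ S.erase b, C (x i) = X + C w := by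
            rw [← map_sum, hw2, C_add, C_add]; ring
          rw [hsum, Finset.card_erase_of_mem hb, hS, Nat.add_sub_cancel]
        rw [Finset.sum_congr rfl hinner, Finset.sum_const, hS]
        rw [derivative_pow, derivative_add, derivative_X, derivative_C, add_zero]
        rw [Nat.add_sub_cancel, C_eq_natCast, mul_one, nsmul_eq_mul]
      -- derivative equal; now conclude equality of polynomials
      have hd0 : derivative ((∑ T ∈ S.powerset, rho (fun i => (C (x i) : R[X])) X T
            * C ((z + ∑ i ∈ S \ T, x i) ^ (S \ T).card)) - (X + C w) ^ (n + 1)) = 0 := by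
        rw [derivative_sub, hderiv, sub_self]
      have hC := Polynomial.eq_C_of_derivative_eq_zero hd0
      have hev : Polynomial.eval 0 ((∑ T ∈ S.powerset, rho (fun i => (C (x i) : R[X])) X T
            * C ((z + ∑ i ∈ S \ T, x i) ^ (S \ T).card)) - (X + C w) ^ (n + 1)) = 0 := by
        rw [eval_sub, eval_finset_sum]
        have hzero : ∀ T ∈ S.powerset, Polynomial.eval 0 (rho (fun i => (C (x i) : R[X])) X T
            * C ((z + ∑ i ∈ S \ T, x i) ^ (S \ T).card))
            = if T = (∅ : Finset ι) then (z + ∑ i ∈ S \ T, x i) ^ (S \ T).card else 0 := by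
          intro T _
          unfold rho
          split
          · simp [eval_finset_sum]
          · simp
        rw [Finset.sum_congr rfl hzero, Finset.sum_ite_eq' S.powerset (∅ : Finset ι)]
        simp [hw, hS, eval_finset_sum]
      rw [Polynomial.coeff_zero_eq_eval_zero, hev, map_zero] at hC
      exact eq_of_sub_eq_zero hC
    have hev := congrArg (Polynomial.eval y) key
    rw [eval_finset_sum, eval_pow, eval_add, eval_X, eval_C] at hev
    have hterm : ∀ T ∈ S.powerset, Polynomial.eval y (rho (fun i => (C (x i) : R[X])) X T
        * C ((z + ∑ i ∈ S \ T, x i) ^ (S \ T).card))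
        = rho x y T * (z + ∑ i ∈ S \ T, x i) ^ (S \ T).card := by
      intro T _
      rw [eval_mul, eval_rho, eval_C]
    rw [Finset.sum_congr rfl hterm] at hev
    rw [hS, hev, hw, add_assoc]

/-- All partitions of `S` (into any number of blocks). -/
def PartsOf (S : Finset ι) : Finset (Finset (Finset ι)) :=
  S.powerset.powerset.filter (fun P => (∅ : Finset ι) ∉ P ∧
    (∀ I ∈ P, ∀ J ∈ P, I ≠ J → Disjoint I J) ∧ P.sup id = S)

lemma mem_PartsOf {S : Finset ι} {P : Finset (Finset ι)} :
    P ∈ PartsOf S ↔ (∅ : Finset ι) ∉ P ∧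
      (∀ I ∈ P, ∀ J ∈ P, I ≠ J → Disjoint I J) ∧ P.sup id = S := by
  unfold PartsOf
  rw [Finset.mem_filter, Finset.mem_powerset]
  constructor
  · tauto
  · intro h
    refine ⟨?_, h⟩
    intro I hI
    rw [Finset.mem_powerset]
    have : I ≤ P.sup id := Finset.le_sup (f := id) hI
    rw [h.2.2] at this
    exact this

lemma PartsOf_empty : PartsOf (∅ : Finset ι) = {∅} := by
  ext P
  rw [mem_PartsOf, Finset.mem_singleton]
  constructor
  · rintro ⟨h1, _, h3⟩
    rw [Finset.eq_empty_iff_forall_notMem]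
    intro I hI
    have hIe : I = ∅ := by
      have : I ≤ P.sup id := Finset.le_sup (f := id) hI
      rw [h3] at this
      exact Finset.subset_empty.mp this
    exact h1 (hIe ▸ hI)
  · rintro rfl
    simp

lemma block_sub {S : Finset ι} {P : Finset (Finset ι)} (hP : P ∈ PartsOf S)
    {L : Finset ι} (hL : L ∈ P) : L ⊆ S := by
  rw [mem_PartsOf] at hP
  have : L ≤ P.sup id := Finset.le_sup (f := id) hL
  rw [hP.2.2] at this
  exact this

lemma erase_mem_PartsOf {S : Finset ι} {P : Finset (Finset ι)} (hP : P ∈ PartsOf S)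
    {L : Finset ι} (hL : L ∈ P) : P.erase L ∈ PartsOf (S \ L) := by
  have hP' := hP
  rw [mem_PartsOf] at hP' ⊢
  obtain ⟨h1, h2, h3⟩ := hP'
  refine ⟨fun h => h1 (Finset.mem_of_mem_erase h), ?_, ?_⟩
  · intro I hI J hJ hIJ
    exact h2 I (Finset.mem_of_mem_erase hI) J (Finset.mem_of_mem_erase hJ) hIJ
  · apply Finset.Subset.antisymm
    · intro a ha
      rw [Finset.mem_sup] at ha
      obtain ⟨J, hJ, haJ⟩ := ha
      obtain ⟨hJL, hJP⟩ := Finset.mem_erase.mp hJ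
      rw [Finset.mem_sdiff]
      refine ⟨block_sub hP hJP haJ, fun haL => ?_⟩
      exact Finset.disjoint_left.mp (h2 J hJP L hL hJL) haJ haL
    · intro a ha
      rw [Finset.mem_sdiff] at ha
      have : a ∈ P.sup id := h3.symm ▸ ha.1
      rw [Finset.mem_sup] at this
      obtain ⟨J, hJ, haJ⟩ := this
      rw [Finset.mem_sup]
      refine ⟨J, Finset.mem_erase.mpr ⟨fun hEq => ha.2 (hEq ▸ haJ), hJ⟩, haJ⟩

lemma not_mem_of_partsOf_sdiff {S T : Finset ι} (hT : T ≠ ∅)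
    {P' : Finset (Finset ι)} (hP' : P' ∈ PartsOf (S \ T)) : T ∉ P' := by
  intro hmem
  have hsub : T ⊆ S \ T := block_sub hP' hmem
  obtain ⟨a, ha⟩ := Finset.nonempty_iff_ne_empty.mpr hT
  exact (Finset.mem_sdiff.mp (hsub ha)).2 ha

lemma insert_mem_PartsOf {S T : Finset ι} (hT : T ≠ ∅) (hTS : T ⊆ S)
    {P' : Finset (Finset ι)} (hP' : P' ∈ PartsOf (S \ T)) : insert T P' ∈ PartsOf S := by
  have hP'' := hP'
  rw [mem_PartsOf] at hP'' ⊢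
  obtain ⟨h1, h2, h3⟩ := hP''
  refine ⟨?_, ?_, ?_⟩
  · intro h
    rcases Finset.mem_insert.mp h with h | h
    · exact hT h.symm
    · exact h1 h
  · intro I hI J hJ hIJ
    rcases Finset.mem_insert.mp hI with rfl | hI' <;>
      rcases Finset.mem_insert.mp hJ with rfl | hJ'
    · exact absurd rfl hIJ
    · have : J ⊆ S \ I := block_sub hP' hJ'
      exact Finset.disjoint_left.mpr (fun a haI haJ => (Finset.mem_sdiff.mp (this haJ)).2 haI)
    · have : I ⊆ S \ J := block_sub hP' hI'
      exact Finset.disjoint_left.mpr (fun a haI _ => (Finset.mem_sdiff.mp (this haI)).2 ‹a ∈ J›)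
    · exact h2 I hI' J hJ' hIJ
  · rw [Finset.sup_insert, h3]
    simp only [id]
    exact Finset.union_sdiff_of_subset hTS

/-- Lemma A : extracting a distinguished block. -/
lemma partition_distinguished_block {M : Type} [AddCommMonoid M] (S : Finset ι)
    (f : Finset (Finset ι) → Finset ι → M) :
    ∑ P ∈ PartsOf S, ∑ L ∈ P, f P L
      = ∑ T ∈ S.powerset.filter (fun T => T ≠ ∅),
          ∑ P' ∈ PartsOf (S \ T), f (insert T P') T := by
  rw [Finset.sum_sigma', Finset.sum_sigma']
  refine Finset.sum_nbij' (fun z => ⟨z.2, z.1.erase z.2⟩) (fun z => ⟨insert z.1 z.2, z.1⟩)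
    ?_ ?_ ?_ ?_ ?_
  · rintro ⟨P, L⟩ hz
    rw [Finset.mem_sigma] at hz ⊢
    obtain ⟨hP, hL⟩ := hz
    refine ⟨Finset.mem_filter.mpr ⟨Finset.mem_powerset.mpr (block_sub hP hL), ?_⟩,
      erase_mem_PartsOf hP hL⟩
    intro h
    exact (mem_PartsOf.mp hP).1 (h ▸ hL)
  · rintro ⟨T, P'⟩ hz
    rw [Finset.mem_sigma] at hz ⊢
    obtain ⟨hT, hP'⟩ := hz
    obtain ⟨hTS, hTne⟩ := Finset.mem_filter.mp hT
    exact ⟨insert_mem_PartsOf hTne (Finset.mem_powerset.mp hTS) hP',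
      Finset.mem_insert_self _ _⟩
  · rintro ⟨P, L⟩ hz
    rw [Finset.mem_sigma] at hz
    simp only [Sigma.mk.inj_iff, heq_eq_eq]
    exact ⟨Finset.insert_erase hz.2, trivial⟩
  · rintro ⟨T, P'⟩ hz
    rw [Finset.mem_sigma] at hz
    obtain ⟨hT, hP'⟩ := hz
    obtain ⟨_, hTne⟩ := Finset.mem_filter.mp hT
    simp only [Sigma.mk.inj_iff, heq_eq_eq]
    exact ⟨trivial, Finset.erase_insert (not_mem_of_partsOf_sdiff hTne hP')⟩
  · rintro ⟨P, L⟩ hz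
    rw [Finset.mem_sigma] at hz
    simp only
    rw [Finset.insert_erase hz.2]

/-- Lemma B : splitting over the block containing a fixed point `a`. -/
lemma partition_point_split {M : Type} [AddCommMonoid M] (S : Finset ι) {a : ι} (ha : a ∈ S)
    (f : Finset (Finset ι) → M) :
    ∑ P ∈ PartsOf S, f P
      = ∑ T ∈ (S.erase a).powerset,
          ∑ P' ∈ PartsOf ((S.erase a) \ T), f (insert (insert a T) P') := by
  have h1 : ∀ P ∈ PartsOf S, ∑ L ∈ P, (if a ∈ L then f P else 0) = f P := by
    intro P hP
    rw [Finset.sum_ite, Finset.sum_const_zero, add_zero, Finset.sum_const]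
    have hcard : (P.filter (fun L => a ∈ L)).card = 1 := by
      rw [Finset.card_eq_one]
      have hmem : a ∈ P.sup id := by rw [(mem_PartsOf.mp hP).2.2]; exact ha
      rw [Finset.mem_sup] at hmem
      obtain ⟨B, hB, haB⟩ := hmem
      refine ⟨B, ?_⟩
      ext J
      rw [Finset.mem_filter, Finset.mem_singleton]
      constructor
      · rintro ⟨hJ, haJ⟩
        by_contra hne
        exact Finset.disjoint_left.mp ((mem_PartsOf.mp hP).2.1 J hJ B hB hne) haJ haB
      · rintro rfl
        exact ⟨hB, haB⟩
    rw [hcard, one_smul]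
  rw [← Finset.sum_congr rfl h1,
    partition_distinguished_block S (fun P L => if a ∈ L then f P else 0)]
  have h2 : ∀ T ∈ S.powerset.filter (fun T => T ≠ ∅),
      (∑ P' ∈ PartsOf (S \ T), if a ∈ T then f (insert T P') else 0)
      = if a ∈ T then ∑ P' ∈ PartsOf (S \ T), f (insert T P') else 0 := by
    intro T _
    by_cases h : a ∈ T <;> simp [h]
  rw [Finset.sum_congr rfl h2]
  rw [Finset.sum_subset (Finset.filter_subset _ _) (by
    intro T hT hTn
    rw [Finset.mem_filter] at hTn
    have : T = ∅ := by tauto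
    subst this
    simp)]
  rw [← Finset.sum_filter]
  refine Finset.sum_nbij' (fun T => T.erase a) (fun T => insert a T) ?_ ?_ ?_ ?_ ?_
  · intro T hT
    rw [Finset.mem_filter, Finset.mem_powerset] at hT
    rw [Finset.mem_powerset]
    exact Finset.erase_subset_erase _ hT.1
  · intro T hT
    rw [Finset.mem_powerset] at hT
    rw [Finset.mem_filter, Finset.mem_powerset]
    exact ⟨Finset.insert_subset ha (hT.trans (Finset.erase_subset _ _)),
      Finset.mem_insert_self _ _⟩
  · intro T hT
    rw [Finset.mem_filter] at hT
    exact Finset.insert_erase hT.2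
  · intro T hT
    rw [Finset.mem_powerset] at hT
    have : a ∉ T := fun hmem => (Finset.mem_erase.mp (hT hmem)).1 rfl
    exact Finset.erase_insert this
  · intro T hT
    rw [Finset.mem_filter] at hT
    have hTeq : insert a (T.erase a) = T := Finset.insert_erase hT.2
    have hset : (S.erase a) \ (T.erase a) = S \ T := by
      ext i
      simp only [Finset.mem_sdiff, Finset.mem_erase]
      constructor
      · rintro ⟨⟨hia, hiS⟩, hiT⟩
        exact ⟨hiS, fun hiT' => hiT ⟨hia, hiT'⟩⟩
      · rintro ⟨hiS, hiT⟩
        refine ⟨⟨fun h => hiT (h ▸ hT.2), hiS⟩, fun h => hiT h.2⟩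
    rw [hset, hTeq]

lemma F_compl (S : Finset ι) (R : Type) [CommRing R] [IsDomain R] [CharZero R]
    (x : ι → R) (t z : R) :
    ∑ T ∈ S.powerset, (z + ∑ i ∈ T, x i) ^ T.card * rho x t (S \ T)
      = (t + z + ∑ i ∈ S, x i) ^ S.card := by
  rw [← F_main S.card S rfl R x t z]
  refine Finset.sum_nbij' (fun T => S \ T) (fun T => S \ T) ?_ ?_ ?_ ?_ ?_ <;>
    intro T hT <;> rw [Finset.mem_powerset] at hT
  · exact Finset.mem_powerset.mpr (Finset.sdiff_subset)
  · exact Finset.mem_powerset.mpr (Finset.sdiff_subset)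
  · exact Finset.sdiff_sdiff_eq_self hT
  · exact Finset.sdiff_sdiff_eq_self hT
  · rw [Finset.sdiff_sdiff_eq_self hT, mul_comm]

lemma K_main (R : Type) [CommRing R] [IsDomain R] [CharZero R] (x : ι → R) (t : R) :
    ∀ (n : ℕ) (S : Finset ι), S.card ≤ n →
    ∑ P ∈ PartsOf S, ∏ J ∈ P, (t * (∑ i ∈ J, x i) ^ (J.card - 1)) = rho x t S := by
  intro n
  induction n with
  | zero =>
    intro S hS
    have : S = ∅ := Finset.card_eq_zero.mp (Nat.le_zero.mp hS)
    subst this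
    rw [PartsOf_empty, rho_empty]
    simp
  | succ n IH =>
    intro S hS
    rcases Finset.eq_empty_or_nonempty S with rfl | ⟨a, ha⟩
    · rw [PartsOf_empty, rho_empty]; simp
    · rw [partition_point_split S ha]
      have hinner : ∀ T ∈ (S.erase a).powerset,
          (∑ P' ∈ PartsOf ((S.erase a) \ T),
            ∏ J ∈ insert (insert a T) P', (t * (∑ i ∈ J, x i) ^ (J.card - 1)))
          = (x a + ∑ i ∈ T, x i) ^ T.card * (t * rho x t ((S.erase a) \ T)) := by
        intro T hT
        rw [Finset.mem_powerset] at hT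
        have haT : a ∉ T := fun h => (Finset.mem_erase.mp (hT h)).1 rfl
        have hprod : ∀ P' ∈ PartsOf ((S.erase a) \ T),
            (∏ J ∈ insert (insert a T) P', (t * (∑ i ∈ J, x i) ^ (J.card - 1)))
            = (t * (x a + ∑ i ∈ T, x i) ^ T.card)
                * ∏ J ∈ P', (t * (∑ i ∈ J, x i) ^ (J.card - 1)) := by
          intro P' hP'
          have hnm : insert a T ∉ P' := by
            intro hmem
            have := block_sub hP' hmem (Finset.mem_insert_self a T)
            rw [Finset.mem_sdiff, Finset.mem_erase] at this
            exact this.1.1 rfl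
          rw [Finset.prod_insert hnm, Finset.card_insert_of_notMem haT,
            Nat.add_sub_cancel, Finset.sum_insert haT]
        rw [Finset.sum_congr rfl hprod, ← Finset.mul_sum,
          IH _ (by
            have h1 : ((S.erase a) \ T).card ≤ (S.erase a).card :=
              Finset.card_le_card (Finset.sdiff_subset)
            have h2 : (S.erase a).card = S.card - 1 := Finset.card_erase_of_mem ha
            omega)]
        ring
      rw [Finset.sum_congr rfl hinner]
      have : ∑ T ∈ (S.erase a).powerset,
          (x a + ∑ i ∈ T, x i) ^ T.card * (t * rho x t ((S.erase a) \ T))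
          = t * ∑ T ∈ (S.erase a).powerset,
              (x a + ∑ i ∈ T, x i) ^ T.card * rho x t ((S.erase a) \ T) := by
        rw [Finset.mul_sum]
        exact Finset.sum_congr rfl (fun T _ => by ring)
      rw [this, F_compl]
      rw [rho_of_ne _ _ (Finset.nonempty_iff_ne_empty.mp ⟨a, ha⟩)]
      rw [← Finset.add_sum_erase _ x ha, Finset.card_erase_of_mem ha]
      ring

lemma map_rho {R S : Type} [CommRing R] [CommRing S] (φ : R →+* S) (x : ι → R) (y : R)
    (T : Finset ι) : rho (fun i => φ (x i)) (φ y) T = φ (rho x y T) := by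
  unfold rho
  split
  · simp
  · rw [map_mul, map_pow, map_add, map_sum]

section Assembly

variable (m : ℕ)

local notation "A" => Polynomial ℂ
local notation "RR" => Polynomial (Polynomial ℂ)

lemma main_R (hm : 1 ≤ m) (x : Fin m → ℂ) :
    ∑ P ∈ PartsOf (Finset.univ : Finset (Fin m)), ∑ L ∈ P,
      ((C (X : A) : RR) * (X + ∑ i ∈ L, (C (C (x i)) : RR)) ^ L.card
        * ∏ J ∈ P.erase L, (C (X : A) * (∑ i ∈ J, (C (C (x i)) : RR)) ^ (J.card - 1)))
    = C (X : A) * (C (X : A) + X + ∑ i ∈ Finset.univ, (C (C (x i)) : RR)) ^ m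
      - C (X : A) * C (rho (fun i => C (x i)) (X : A) (Finset.univ : Finset (Fin m))) := by
  set t : RR := C (X : A) with ht
  set x' : Fin m → RR := fun i => C (C (x i)) with hx'
  rw [partition_distinguished_block (Finset.univ : Finset (Fin m))
    (fun P L => t * (X + ∑ i ∈ L, x' i) ^ L.card
      * ∏ J ∈ P.erase L, (t * (∑ i ∈ J, x' i) ^ (J.card - 1)))]
  have hstep : ∀ T ∈ (Finset.univ : Finset (Fin m)).powerset.filter (fun T => T ≠ ∅),
      (∑ P' ∈ PartsOf (Finset.univ \ T),
        t * (X + ∑ i ∈ T, x' i) ^ T.card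
          * ∏ J ∈ (insert T P').erase T, (t * (∑ i ∈ J, x' i) ^ (J.card - 1)))
      = t * ((X + ∑ i ∈ T, x' i) ^ T.card * rho x' t (Finset.univ \ T)) := by
    intro T hT
    obtain ⟨-, hTne⟩ := Finset.mem_filter.mp hT
    have hcongr : ∀ P' ∈ PartsOf (Finset.univ \ T),
        t * (X + ∑ i ∈ T, x' i) ^ T.card
          * ∏ J ∈ (insert T P').erase T, (t * (∑ i ∈ J, x' i) ^ (J.card - 1))
        = t * (X + ∑ i ∈ T, x' i) ^ T.card
          * ∏ J ∈ P', (t * (∑ i ∈ J, x' i) ^ (J.card - 1)) := by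
      intro P' hP'
      rw [Finset.erase_insert (not_mem_of_partsOf_sdiff hTne hP')]
    rw [Finset.sum_congr rfl hcongr, ← Finset.mul_sum,
      K_main RR x' t (Finset.univ \ T).card (Finset.univ \ T) le_rfl]
    ring
  rw [Finset.sum_congr rfl hstep, ← Finset.mul_sum]
  have hsplit : ∑ T ∈ (Finset.univ : Finset (Fin m)).powerset.filter (fun T => T ≠ ∅),
      (X + ∑ i ∈ T, x' i) ^ T.card * rho x' t (Finset.univ \ T)
      = (t + X + ∑ i ∈ Finset.univ, x' i) ^ m - rho x' t (Finset.univ : Finset (Fin m)) := by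
    have hfull := F_compl (Finset.univ : Finset (Fin m)) RR x' t X
    rw [Finset.card_univ, Fintype.card_fin] at hfull
    rw [Finset.filter_ne', ← hfull]
    have h0 : ((X : RR) + ∑ i ∈ (∅ : Finset (Fin m)), x' i) ^ (∅ : Finset (Fin m)).card
        * rho x' t (Finset.univ \ ∅) = rho x' t (Finset.univ : Finset (Fin m)) := by
      simp
    rw [eq_sub_iff_add_eq, ← h0, add_comm]
    exact Finset.add_sum_erase _
      (fun T => ((X : RR) + ∑ i ∈ T, x' i) ^ T.card * rho x' t (Finset.univ \ T))
      (Finset.mem_powerset.mpr (Finset.empty_subset _))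
  rw [hsplit, mul_sub]
  congr 2
  exact map_rho (C : A →+* RR) (fun i => C (x i)) (X : A)
    (Finset.univ : Finset (Fin m))

variable (n' : ℕ)

lemma coeffY (hm : 1 ≤ m) (hn : 1 ≤ n') (x : Fin m → ℂ) :
    ∑ P ∈ PartsOf (Finset.univ : Finset (Fin m)), ∑ L ∈ P,
      ((C (∑ i ∈ L, x i)) ^ (L.card - n') * (L.card.choose n' : A)
        * ((X : A) * ∏ J ∈ P.erase L, ((X : A) * (C (∑ i ∈ J, x i)) ^ (J.card - 1))))
    = C ((m.choose n' : ℂ)) * ((X : A) * ((X : A) + C (∑ i, x i)) ^ (m - n')) := by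
  have E := congrArg (fun q : RR => Polynomial.coeff q n') (main_R m hm x)
  rw [Polynomial.finset_sum_coeff] at E
  have hL : ∀ P ∈ PartsOf (Finset.univ : Finset (Fin m)),
      (∑ L ∈ P, ((C (X : A) : RR) * (X + ∑ i ∈ L, (C (C (x i)) : RR)) ^ L.card
        * ∏ J ∈ P.erase L, (C (X : A) * (∑ i ∈ J, (C (C (x i)) : RR)) ^ (J.card - 1)))).coeff n'
      = ∑ L ∈ P, ((C (∑ i ∈ L, x i)) ^ (L.card - n') * (L.card.choose n' : A)
        * ((X : A) * ∏ J ∈ P.erase L, ((X : A) * (C (∑ i ∈ J, x i)) ^ (J.card - 1)))) := by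
    intro P hP
    rw [Polynomial.finset_sum_coeff]
    refine Finset.sum_congr rfl (fun L hL => ?_)
    have hterm : (C (X : A) : RR) * (X + ∑ i ∈ L, (C (C (x i)) : RR)) ^ L.card
        * ∏ J ∈ P.erase L, (C (X : A) * (∑ i ∈ J, (C (C (x i)) : RR)) ^ (J.card - 1))
        = (X + C ((C (∑ i ∈ L, x i)) : A)) ^ L.card
          * C ((X : A) * ∏ J ∈ P.erase L, ((X : A) * (C (∑ i ∈ J, x i)) ^ (J.card - 1))) := by
      have hs : ∀ (J : Finset (Fin m)), (∑ i ∈ J, (C (C (x i)) : RR)) = C (C (∑ i ∈ J, x i)) := by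
        intro J
        rw [← map_sum, ← map_sum]
      simp only [hs, map_mul, map_prod, map_pow]
      ring
    rw [hterm, Polynomial.coeff_mul_C, Polynomial.coeff_X_add_C_pow]
  rw [Finset.sum_congr rfl hL] at E
  rw [E]
  have hs2 : (∑ i ∈ Finset.univ, (C (C (x i)) : RR)) = C (C (∑ i ∈ Finset.univ, x i)) := by
    rw [← map_sum, ← map_sum]
  rw [hs2, Polynomial.coeff_sub]
  have h1 : ((C (X : A) : RR) * (C (X : A) + X + C (C (∑ i ∈ Finset.univ, x i))) ^ m).coeff n'
      = (m.choose n' : A) * ((X : A) * ((X : A) + C (∑ i, x i)) ^ (m - n')) := by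
    have : (C (X : A) : RR) * (C (X : A) + X + C (C (∑ i ∈ Finset.univ, x i))) ^ m
        = (X + C ((X : A) + C (∑ i, x i))) ^ m * C (X : A) := by
      rw [map_add]
      ring
    rw [this, Polynomial.coeff_mul_C, Polynomial.coeff_X_add_C_pow]
    ring
  have h2 : ((C (X : A) : RR)
      * C (rho (fun i => C (x i)) (X : A) (Finset.univ : Finset (Fin m)))).coeff n' = 0 := by
    rw [← map_mul, Polynomial.coeff_C, if_neg (by omega)]
  rw [h1, h2, sub_zero, ← Polynomial.C_eq_natCast]

end Assembly

lemma choose_swap {m n q : ℕ} (h : n + q ≤ m) :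
    m.choose n * (m - n).choose q = m.choose q * (m - q).choose n := by
  have h1 : m.choose (n + q) * (n + q).choose n = m.choose n * (m - n).choose q := by
    have := Nat.choose_mul (n := m) (k := n + q) (s := n) (Nat.le_add_right _ _)
    rwa [Nat.add_sub_cancel_left] at this
  have h2 : m.choose (n + q) * (n + q).choose q = m.choose q * (m - q).choose n := by
    have := Nat.choose_mul (n := m) (k := n + q) (s := q) (Nat.le_add_left _ _)
    rwa [Nat.add_sub_cancel] at this
  have h3 : (n + q).choose n = (n + q).choose q := by
    have := Nat.choose_symm (n := n + q) (k := n) (Nat.le_add_right _ _)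
    rw [Nat.add_sub_cancel_left] at this
    exact this.symm
  rw [← h1, h3, h2]

theorem identity_general_n (m p n : ℕ) (hp : 1 ≤ p) (hpm : p ≤ m)
    (hn : 1 ≤ n) (hnm : n ≤ m + 1 - p) (x : Fin m → ℂ) :
    ∑ P ∈ Finset.univ.filter (IsPartitionInto p (Finset.univ : Finset (Fin m))),
      ∑ L ∈ P.filter (fun L => n ≤ L.card),
        (Nat.choose L.card n : ℂ) * (∑ i ∈ L, x i) ^ (L.card - n)
          * ∏ J ∈ P.erase L, (∑ i ∈ J, x i) ^ (J.card - 1)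
      = (Nat.choose m (p - 1) : ℂ) * (Nat.choose (m + 1 - p) n : ℂ)
          * (∑ i, x i) ^ (m + 1 - p - n) := by
  have hm : 1 ≤ m := hp.trans hpm
  have E := congrArg (fun q : Polynomial ℂ => q.coeff p) (coeffY m n hm hn x)
  rw [Polynomial.finset_sum_coeff] at E
  -- rewrite each inner sum's coefficient
  have hP1 : ∀ P ∈ PartsOf (Finset.univ : Finset (Fin m)),
      (∑ L ∈ P, ((C (∑ i ∈ L, x i)) ^ (L.card - n) * (L.card.choose n : Polynomial ℂ)
        * ((X : Polynomial ℂ)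
           * ∏ J ∈ P.erase L, ((X : Polynomial ℂ) * (C (∑ i ∈ J, x i)) ^ (J.card - 1))))).coeff p
      = if P.card = p then
          (∑ L ∈ P, (L.card.choose n : ℂ) * (∑ i ∈ L, x i) ^ (L.card - n)
            * ∏ J ∈ P.erase L, (∑ i ∈ J, x i) ^ (J.card - 1))
        else 0 := by
    intro P hP
    have hmono : ∀ L ∈ P, (C (∑ i ∈ L, x i)) ^ (L.card - n) * (L.card.choose n : Polynomial ℂ)
        * ((X : Polynomial ℂ)
           * ∏ J ∈ P.erase L, ((X : Polynomial ℂ) * (C (∑ i ∈ J, x i)) ^ (J.card - 1)))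
        = Polynomial.monomial P.card ((L.card.choose n : ℂ) * (∑ i ∈ L, x i) ^ (L.card - n)
            * ∏ J ∈ P.erase L, (∑ i ∈ J, x i) ^ (J.card - 1)) := by
      intro L hL
      obtain ⟨k, hk⟩ : ∃ k, P.card = k + 1 :=
        ⟨P.card - 1, by have := Finset.card_pos.mpr ⟨L, hL⟩; omega⟩
      rw [Finset.prod_mul_distrib, Finset.prod_const, Finset.card_erase_of_mem hL, hk,
        Nat.add_sub_cancel, ← Polynomial.C_mul_X_pow_eq_monomial]
      simp only [map_mul, map_pow, map_prod, map_natCast]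
      ring
    rw [Finset.sum_congr rfl hmono, Polynomial.finset_sum_coeff]
    simp only [Polynomial.coeff_monomial]
    by_cases h : P.card = p <;> simp [h]
  rw [Finset.sum_congr rfl hP1, ← Finset.sum_filter] at E
  have hsets : (PartsOf (Finset.univ : Finset (Fin m))).filter (fun P => P.card = p)
      = Finset.univ.filter (IsPartitionInto p (Finset.univ : Finset (Fin m))) := by
    ext P
    rw [Finset.mem_filter, Finset.mem_filter, mem_PartsOf]
    unfold IsPartitionInto
    constructor
    · rintro ⟨⟨h1, h2, h3⟩, h4⟩
      exact ⟨Finset.mem_univ _, h4, h1, h2, h3⟩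
    · rintro ⟨-, h4, h1, h2, h3⟩
      exact ⟨⟨h1, h2, h3⟩, h4⟩
  rw [hsets] at E
  have hinner : ∀ P ∈ Finset.univ.filter (IsPartitionInto p (Finset.univ : Finset (Fin m))),
      (∑ L ∈ P, (L.card.choose n : ℂ) * (∑ i ∈ L, x i) ^ (L.card - n)
        * ∏ J ∈ P.erase L, (∑ i ∈ J, x i) ^ (J.card - 1))
      = ∑ L ∈ P.filter (fun L => n ≤ L.card),
          (L.card.choose n : ℂ) * (∑ i ∈ L, x i) ^ (L.card - n)
            * ∏ J ∈ P.erase L, (∑ i ∈ J, x i) ^ (J.card - 1) := by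
    intro P _
    refine (Finset.sum_filter_of_ne ?_).symm
    intro L _ hne
    by_contra hcard
    apply hne
    rw [Nat.choose_eq_zero_of_lt (by omega)]
    simp
  rw [Finset.sum_congr rfl hinner] at E
  rw [E]
  -- compute the right-hand side coefficient
  obtain ⟨q, hq⟩ : ∃ q, p = q + 1 := ⟨p - 1, by omega⟩
  subst hq
  rw [Polynomial.coeff_C_mul, Polynomial.coeff_X_mul, Polynomial.coeff_X_add_C_pow]
  have h1 : n + q ≤ m := by omega
  have e1 : q + 1 - 1 = q := by omega
  have e2 : m + 1 - (q + 1) = m - q := by omega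
  have e3 : m - n - q = m - q - n := by omega
  rw [e1, e2, e3]
  have hch : ((m.choose n : ℂ)) * (((m - n).choose q : ℂ))
      = ((m.choose q : ℂ)) * (((m - q).choose n : ℂ)) := by
    exact_mod_cast congrArg (Nat.cast : ℕ → ℂ) (choose_swap h1)
  linear_combination (∑ i, x i) ^ (m - q - n) * hch
end

section
/- Let n ≥ 1 be a natural number and let y and a be complex numbers. Then ∑_{p=1}^{n} y^{p} · ∑_{{I_1,…,I_p} ∈ Π_p({1,…,n})} ∏_{j=1}^{p} (a · |I_j|)^{|I_j| − 1} = y · (y + n·a)^{n−1}. -/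
/-!
Group the partitions of `S` by the block `{s} ∪ T` containing a fixed point `s`: deleting that
block leaves an arbitrary partition of the rest, so the weighted partition sum satisfies
`G(S) = ∑_{T ⊆ S \ {s}} w({s} ∪ T) G(S \ ({s} ∪ T))`, and the factor `y ^ p` is one `y` per block.
For the weight `w I = y (a |I|)^(|I| - 1)` this recursion only depends on `|S|` and is solved by
the Abel polynomials `A_0 = 1`, `A_k(y) = y (y + k a)^(k - 1)`: this is Abel's identity
`∑_k C(N, k) (c - k b)^(N - k) A_k(X) = (X + c)^N`, proved by induction on `N` because
`A_{k+1}' = (k + 1) A_k(X + b)` makes both sides have the same derivative, and they agree at `0`.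
-/

open Finset Polynomial

theorem Polynomial.eq_of_derivative_eq_of_eval_zero_eq {R : Type*} [Ring R] [IsAddTorsionFree R]
    {p q : R[X]} (hd : derivative p = derivative q) (h0 : p.eval 0 = q.eval 0) : p = q := by
  have h := eq_C_of_derivative_eq_zero (p := p - q) (by rw [derivative_sub, hd, sub_self])
  rw [coeff_zero_eq_eval_zero, eval_sub, h0, sub_self, map_zero] at h
  exact sub_eq_zero.mp h

section Abel

variable {R : Type*} [CommRing R]

noncomputable def abelPoly (b : R) : ℕ → R[X]
  | 0 => 1
  | k + 1 => X * (X + C ((k + 1 : ℕ) * b)) ^ k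

theorem eval_abelPoly (b y : R) {k : ℕ} (hk : k ≠ 0) :
    (abelPoly b k).eval y = y * (y + k * b) ^ (k - 1) := by
  obtain ⟨k, rfl⟩ := Nat.exists_eq_succ_of_ne_zero hk
  simp [abelPoly]

theorem derivative_abelPoly_succ (b : R) (k : ℕ) :
    derivative (abelPoly b (k + 1)) = (k + 1 : R[X]) * (abelPoly b k).comp (X + C b) := by
  cases k with
  | zero => simp [abelPoly]
  | succ k =>
    simp only [abelPoly, derivative_mul, derivative_X, derivative_X_add_C_pow, mul_comp, X_comp,
      pow_comp, add_comp, C_comp]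
    push_cast
    simp only [map_add, map_mul, map_natCast, C_1]
    ring

theorem sum_choose_mul_abelPoly [IsAddTorsionFree R] (b c : R) (N : ℕ) :
    ∑ k ∈ range (N + 1), C ((N.choose k : R) * (c - k * b) ^ (N - k)) * abelPoly b k
      = (X + C c) ^ N := by
  induction N generalizing c with
  | zero => simp [abelPoly]
  | succ N ih =>
    apply eq_of_derivative_eq_of_eval_zero_eq
    · have hterm : ∀ j ∈ range (N + 1),
          derivative (C (((N + 1).choose (j + 1) : R) * (c - (j + 1 : ℕ) * b) ^ (N + 1 - (j + 1)))
              * abelPoly b (j + 1))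
            = (N + 1 : R[X]) * (C ((N.choose j : R) * (c - b - j * b) ^ (N - j))
              * abelPoly b j).comp (X + C b) := by
        intro j _
        have hchoose : ((N + 1).choose (j + 1) * (j + 1) : R) = (N + 1) * N.choose j := by
          exact_mod_cast congrArg (Nat.cast : ℕ → R) (Nat.add_one_mul_choose_eq N j).symm
        have harg : c - (j + 1 : ℕ) * b = c - b - j * b := by push_cast; ring
        rw [derivative_C_mul, derivative_abelPoly_succ, mul_comp, C_comp, Nat.add_sub_add_right,
          harg]
        have hchooseC := congrArg C hchoose
        simp only [map_mul, map_add, map_natCast, map_one] at hchooseC ⊢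
        linear_combination
          (C ((c - b - j * b) ^ (N - j)) * (abelPoly b j).comp (X + C b)) * hchooseC
      rw [derivative_sum, sum_range_succ', sum_congr rfl hterm, ← mul_sum, ← Polynomial.sum_comp,
        ih, derivative_X_add_C_pow]
      simp only [abelPoly, mul_one, derivative_C, add_zero, pow_comp, add_comp, X_comp, C_comp,
        add_assoc, ← C_add, add_sub_cancel, Nat.add_sub_cancel, Nat.cast_add_one, map_add,
        map_natCast, map_one]
    · simp [eval_finsetSum, sum_range_succ', abelPoly]

theorem sum_choose_smul_eval_abelPoly [IsAddTorsionFree R] (a y : R) (N : ℕ) :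
    ∑ j ∈ range (N + 1), N.choose j • (y * (a * (j + 1)) ^ j * (abelPoly a (N - j)).eval y)
      = (abelPoly a (N + 1)).eval y := by
  have habel := congrArg (eval y) (sum_choose_mul_abelPoly a ((N + 1) * a) N)
  simp only [eval_finsetSum, eval_mul, eval_C, eval_pow, eval_add, eval_X] at habel
  rw [eval_abelPoly a y (Nat.add_one_ne_zero N), Nat.add_sub_cancel, Nat.cast_add_one, ← habel,
    mul_sum, ← sum_range_reflect]
  refine sum_congr rfl fun j hj => ?_
  have hjN : j ≤ N := Nat.lt_succ_iff.mp (mem_range.mp hj)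
  rw [Nat.add_sub_cancel, Nat.choose_symm hjN, Nat.sub_sub_self hjN, nsmul_eq_mul, Nat.cast_sub hjN]
  ring

end Abel

def IsPartition {ι : Type*} [DecidableEq ι] (S : Finset ι) (P : Finset (Finset ι)) : Prop :=
  (∅ : Finset ι) ∉ P ∧ (∀ I ∈ P, ∀ J ∈ P, I ≠ J → Disjoint I J) ∧ P.sup id = S

instance {ι : Type*} [DecidableEq ι] (S : Finset ι) : DecidablePred (IsPartition S) :=
  fun _ => by unfold IsPartition; infer_instance

namespace IsPartition

variable {ι : Type*} [DecidableEq ι] {S B : Finset ι} {P Q : Finset (Finset ι)} {s : ι}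

def toFinpartition (h : IsPartition S P) : Finpartition S where
  parts := P
  supIndep := Set.PairwiseDisjoint.supIndep fun I hI J hJ hIJ => h.2.1 I hI J hJ hIJ
  sup_parts := h.2.2
  bot_notMem := h.1

theorem subset_of_mem (h : IsPartition S P) (hB : B ∈ P) : B ⊆ S :=
  h.toFinpartition.le hB

theorem card_le (h : IsPartition S P) : #P ≤ #S :=
  h.toFinpartition.card_parts_le_card

theorem nonempty (h : IsPartition S P) (hS : S.Nonempty) : P.Nonempty :=
  h.toFinpartition.parts_nonempty hS.ne_empty

theorem nonempty_of_mem (h : IsPartition S P) (hB : B ∈ P) : B.Nonempty :=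
  h.toFinpartition.nonempty_of_mem_parts hB

theorem erase (h : IsPartition S P) (hB : B ∈ P) : IsPartition (S \ B) (P.erase B) := by
  refine ⟨fun h0 => h.1 (mem_of_mem_erase h0),
    fun I hI J hJ hIJ => h.2.1 I (mem_of_mem_erase hI) J (mem_of_mem_erase hJ) hIJ, ?_⟩
  have hdisj : Disjoint B ((P.erase B).sup id) := Finset.disjoint_sup_right.mpr fun I hI =>
    h.2.1 B hB I (mem_of_mem_erase hI) (ne_of_mem_erase hI).symm
  rw [← h.2.2, ← insert_erase hB, sup_insert, erase_insert (notMem_erase B P), id, sup_eq_union,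
    union_sdiff_cancel_left hdisj]

theorem notMem_of_sdiff (h : IsPartition (S \ B) Q) : B ∉ Q := fun hBQ =>
  (h.nonempty_of_mem hBQ).ne_empty (subset_empty.mp fun x hx => by
    simpa using (mem_sdiff.mp (h.subset_of_mem hBQ hx)).2 hx)

theorem existsUnique_insert_mem (h : IsPartition S P) (hs : s ∈ S) :
    ∃! T, T ∈ (S.erase s).powerset ∧ insert s T ∈ P := by
  obtain ⟨B, hB, hsB⟩ := h.toFinpartition.exists_mem hs
  refine ⟨B.erase s, ⟨mem_powerset.mpr (erase_subset_erase s (h.subset_of_mem hB)),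
    by rwa [insert_erase hsB]⟩, fun T ⟨hT, hTP⟩ => ?_⟩
  have hsT : s ∉ T := fun hsT => by simpa using mem_powerset.mp hT hsT
  rw [← h.toFinpartition.eq_of_mem_parts hTP hB (mem_insert_self s T) hsB, erase_insert hsT]

theorem insert (h : IsPartition (S \ B) Q) (hBS : B ⊆ S) (hB : B.Nonempty) :
    IsPartition S (insert B Q) := by
  have hdisj : ∀ I ∈ Q, Disjoint I B := fun I hI =>
    disjoint_of_subset_left (h.subset_of_mem hI) sdiff_disjoint
  refine ⟨?_, ?_, ?_⟩
  · rw [mem_insert, not_or]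
    exact ⟨hB.ne_empty.symm, h.1⟩
  · intro I hI J hJ hIJ
    rcases mem_insert.mp hI with rfl | hI <;> rcases mem_insert.mp hJ with hJB | hJ
    · exact absurd hJB.symm hIJ
    · exact (hdisj J hJ).symm
    · exact hJB ▸ hdisj I hI
    · exact h.2.1 I hI J hJ hIJ
  · rw [sup_insert, h.2.2, id, sup_eq_union, union_sdiff_of_subset hBS]

end IsPartition

theorem isPartition_empty_iff {ι : Type*} [DecidableEq ι] {P : Finset (Finset ι)} :
    IsPartition ∅ P ↔ P = ∅ := by
  refine ⟨fun h => eq_empty_of_forall_notMem fun I hI => ?_,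
    fun h => h ▸ ⟨notMem_empty _, by simp, sup_empty⟩⟩
  exact (h.nonempty_of_mem hI).ne_empty (subset_empty.mp (h.subset_of_mem hI))

theorem filter_isPartitionInto {ι : Type*} [DecidableEq ι] [Fintype ι] (p : ℕ) (S : Finset ι) :
    univ.filter (IsPartitionInto p S) = (univ.filter (IsPartition S)).filter (#· = p) := by
  ext P
  simp only [mem_filter, mem_univ, true_and]
  exact and_comm

section partitionSum

variable {ι R : Type*} [DecidableEq ι] [Fintype ι] [CommSemiring R] {S B : Finset ι} {s : ι}

def partitionSum (w : Finset ι → R) (S : Finset ι) : R :=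
  ∑ P ∈ univ.filter (IsPartition S), ∏ I ∈ P, w I

theorem partitionSum_empty (w : Finset ι → R) : partitionSum w ∅ = 1 := by
  simp [partitionSum, isPartition_empty_iff, filter_eq']

theorem sum_filter_mem_isPartition (w : Finset ι → R) (hBS : B ⊆ S) (hB : B.Nonempty) :
    ∑ P ∈ (univ.filter (IsPartition S)).filter (B ∈ ·), ∏ I ∈ P, w I
      = w B * partitionSum w (S \ B) := by
  rw [partitionSum, mul_sum]
  refine sum_nbij' (fun P => P.erase B) (insert B) ?_ ?_ ?_ ?_ ?_
  · simp only [mem_filter, mem_univ, true_and, and_imp]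
    exact fun P hP hBP => hP.erase hBP
  · simp only [mem_filter, mem_univ, true_and]
    exact fun Q hQ => ⟨hQ.insert hBS hB, mem_insert_self B Q⟩
  · simp only [mem_filter, and_imp]
    exact fun P _ _ hBP => insert_erase hBP
  · simp only [mem_filter, mem_univ, true_and]
    exact fun Q hQ => erase_insert hQ.notMem_of_sdiff
  · simp only [mem_filter, and_imp]
    exact fun P _ _ hBP => (mul_prod_erase P w hBP).symm

theorem partitionSum_eq_sum_powerset (w : Finset ι → R) (hs : s ∈ S) :
    partitionSum w S
      = ∑ T ∈ (S.erase s).powerset, w (insert s T) * partitionSum w (S \ insert s T) := by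
  have hsub : ∀ T ∈ (S.erase s).powerset, insert s T ⊆ S := fun T hT =>
    insert_subset hs ((mem_powerset.mp hT).trans (erase_subset s S))
  calc partitionSum w S
      = ∑ P ∈ univ.filter (IsPartition S), ∑ T ∈ (S.erase s).powerset,
          if insert s T ∈ P then ∏ I ∈ P, w I else 0 := by
        refine sum_congr rfl fun P hP => ?_
        obtain ⟨T, hT, huniq⟩ := (mem_filter.mp hP).2.existsUnique_insert_mem hs
        rw [sum_eq_single_of_mem T hT.1 fun T' hT' hne => if_neg fun h => hne (huniq T' ⟨hT', h⟩),
          if_pos hT.2]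
    _ = ∑ T ∈ (S.erase s).powerset, ∑ P ∈ (univ.filter (IsPartition S)).filter (insert s T ∈ ·),
          ∏ I ∈ P, w I := by
        rw [sum_comm]
        exact sum_congr rfl fun T _ => (sum_filter _ _).symm
    _ = _ := sum_congr rfl fun T hT =>
        sum_filter_mem_isPartition w (hsub T hT) (insert_nonempty s T)

end partitionSum

theorem partitionSum_eq_eval_abelPoly {ι R : Type*} [DecidableEq ι] [Fintype ι] [CommRing R]
    [IsAddTorsionFree R] (a y : R) (S : Finset ι) :
    partitionSum (fun I => y * (a * #I) ^ (#I - 1)) S = (abelPoly a #S).eval y := by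
  induction S using Finset.strongInduction with
  | H S ih =>
  rcases S.eq_empty_or_nonempty with rfl | ⟨s, hs⟩
  · simp [partitionSum_empty, abelPoly]
  have hterm : ∀ T ∈ (S.erase s).powerset,
      y * (a * #(insert s T)) ^ (#(insert s T) - 1)
          * partitionSum (fun I => y * (a * #I) ^ (#I - 1)) (S \ insert s T)
        = y * (a * (#T + 1)) ^ #T * (abelPoly a (#(S.erase s) - #T)).eval y := by
    intro T hT
    have hTs : T ⊆ S.erase s := mem_powerset.mp hT
    have hsT : s ∉ T := fun hsT => by simpa using hTs hsT
    have hsub : insert s T ⊆ S := insert_subset hs (hTs.trans (erase_subset s S))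
    rw [ih _ (sdiff_ssubset hsub (insert_nonempty s T)), card_sdiff_of_subset hsub,
      card_insert_of_notMem hsT, ← card_erase_add_one hs, Nat.add_sub_cancel,
      Nat.add_sub_add_right, Nat.cast_add_one]
  rw [partitionSum_eq_sum_powerset _ hs, sum_congr rfl hterm,
    sum_powerset_apply_card fun j => y * (a * (j + 1)) ^ j * (abelPoly a (#(S.erase s) - j)).eval y,
    ← card_erase_add_one hs]
  exact sum_choose_smul_eval_abelPoly a y _

theorem cayley_type_identity (n : ℕ) (hn : 1 ≤ n) (y a : ℂ) :
    ∑ p ∈ Finset.Icc 1 n, y ^ p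
        * ∑ P ∈ Finset.univ.filter (IsPartitionInto p (Finset.univ : Finset (Fin n))),
            ∏ I ∈ P, (a * (I.card : ℂ)) ^ (I.card - 1)
      = y * (y + (n : ℂ) * a) ^ (n - 1) := by
  have hcard : ∀ P ∈ univ.filter (IsPartition (univ : Finset (Fin n))), #P ∈ Icc 1 n := by
    intro P hP
    have hP := (mem_filter.mp hP).2
    have hne : (univ : Finset (Fin n)).Nonempty := univ_nonempty_iff.mpr ⟨⟨0, hn⟩⟩
    exact mem_Icc.mpr ⟨card_pos.mpr (hP.nonempty hne), by simpa using hP.card_le⟩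
  calc _ = ∑ p ∈ Icc 1 n, ∑ P ∈ (univ.filter (IsPartition univ)).filter (#· = p),
          ∏ I ∈ P, y * (a * #I) ^ (#I - 1) := by
        refine sum_congr rfl fun p _ => ?_
        rw [filter_isPartitionInto, mul_sum]
        refine sum_congr rfl fun P hP => ?_
        rw [prod_mul_distrib, prod_const, (mem_filter.mp hP).2]
    _ = partitionSum (fun I => y * (a * #I) ^ (#I - 1)) (univ : Finset (Fin n)) :=
        sum_fiberwise_of_maps_to hcard _
    _ = _ := by
        rw [partitionSum_eq_eval_abelPoly, card_univ, Fintype.card_fin,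
          eval_abelPoly a y (Nat.one_le_iff_ne_zero.mp hn)]
end

section
/- Let N ≥ 1 and n ≥ 1 be natural numbers and let x_1, …, x_n be complex numbers. Then ∑_{q=1}^{min(N, n)} ∑_{{J_1,…,J_q} ∈ Π_q({1,…,N})} ∑_{(j_1,…,j_q)} ∏_{k=1}^{q} x_{j_k}^{|J_k|} = (∑_{j=1}^{n} x_j)^{N}, where the innermost sum is over all injective assignments of indices j_k ∈ {1,…,n} to the blocks J_k (that is, over all injective maps from the set of blocks of the partition to {1,…,n}). -/
/-!
Expanding `(∑ j, x j) ^ N` gives `∑ g : Fin N → Fin n, ∏ i, x (g i)`. Group the maps `g` by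
the partition of `Fin N` into the nonempty fibers of `g`. For a fixed partition `P`, the maps
with fibers exactly `P` are the composites `f ∘ block` with `f` an injective map from the
blocks of `P` to `Fin n`, and then `∏ i, x (g i) = ∏ J, x (f J) ^ |J|`.
-/

open Finset Function

variable {α β : Type*} [Fintype α]

namespace IsPartitionInto

variable [DecidableEq α] {q : ℕ} {P : Finset (Finset α)}

theorem nonempty_of_mem (hP : IsPartitionInto q univ P) {J : Finset α} (hJ : J ∈ P) :
    J.Nonempty :=
  nonempty_iff_ne_empty.2 fun h => hP.2.1 (h ▸ hJ)

theorem existsUnique_mem (hP : IsPartitionInto q univ P) (a : α) : ∃! J ∈ P, a ∈ J := by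
  obtain ⟨-, -, hdisj, hsup⟩ := hP
  obtain ⟨J, hJ, haJ⟩ := mem_sup.1 (hsup ▸ mem_univ a : a ∈ P.sup id)
  refine ⟨J, ⟨hJ, haJ⟩, fun J' ⟨hJ', haJ'⟩ => ?_⟩
  by_contra hne
  exact disjoint_left.1 (hdisj J' hJ' J hJ hne) haJ' haJ

noncomputable def block (hP : IsPartitionInto q univ P) (a : α) : {J // J ∈ P} :=
  ⟨P.choose (a ∈ ·) (hP.existsUnique_mem a), choose_mem _ _ _⟩

theorem block_eq_iff (hP : IsPartitionInto q univ P) {a : α} {J : {J // J ∈ P}} :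
    hP.block a = J ↔ a ∈ J.1 := by
  refine ⟨fun h => h ▸ choose_property (a ∈ ·) P (hP.existsUnique_mem a), fun ha => ?_⟩
  exact Subtype.ext <| (hP.existsUnique_mem a).unique
    ⟨choose_mem _ _ _, choose_property (a ∈ ·) P _⟩ ⟨J.2, ha⟩

theorem mem_block (hP : IsPartitionInto q univ P) (a : α) : a ∈ (hP.block a).1 :=
  hP.block_eq_iff.1 rfl

theorem block_surjective (hP : IsPartitionInto q univ P) : Surjective hP.block := fun J =>
  (hP.nonempty_of_mem J.2).imp fun _ => hP.block_eq_iff.2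

theorem prod_comp_block {M : Type*} [CommMonoid M] (hP : IsPartitionInto q univ P)
    (h : {J // J ∈ P} → M) : ∏ a, h (hP.block a) = ∏ J, h J ^ J.1.card := by
  rw [← prod_fiberwise' univ hP.block h]
  refine prod_congr rfl fun J _ => ?_
  rw [prod_const]
  congr 2
  ext a
  simp [hP.block_eq_iff]

end IsPartitionInto

section Fibers

variable [DecidableEq β]

def fiber (g : α → β) (b : β) : Finset α := univ.filter (g · = b)

theorem mem_fiber {g : α → β} {b : β} {a : α} : a ∈ fiber g b ↔ g a = b := by
  simp [fiber]

variable [DecidableEq α]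

def fibers (g : α → β) : Finset (Finset α) := univ.image fun a => fiber g (g a)

theorem mem_fibers {g : α → β} {J : Finset α} : J ∈ fibers g ↔ ∃ a, fiber g (g a) = J := by
  simp [fibers]

theorem isPartitionInto_fibers (g : α → β) :
    IsPartitionInto (fibers g).card univ (fibers g) := by
  refine ⟨rfl, fun h => ?_, fun I hI J hJ hne => ?_, ?_⟩
  · obtain ⟨a, ha⟩ := mem_fibers.1 h
    exact notMem_empty a (ha ▸ mem_fiber.2 rfl)
  · obtain ⟨a, rfl⟩ := mem_fibers.1 hI
    obtain ⟨a', rfl⟩ := mem_fibers.1 hJ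
    refine disjoint_left.2 fun c hc hc' => hne ?_
    rw [← mem_fiber.1 hc, ← mem_fiber.1 hc']
  · exact eq_univ_of_forall fun a => mem_sup.2 ⟨_, mem_fibers.2 ⟨a, rfl⟩, mem_fiber.2 rfl⟩

theorem isPartitionInto_fibers_iff {g : α → β} {q : ℕ} :
    IsPartitionInto q univ (fibers g) ↔ (fibers g).card = q :=
  ⟨fun h => h.1, fun h => h ▸ isPartitionInto_fibers g⟩

theorem card_fibers (g : α → β) : (fibers g).card = (univ.image g).card := by
  rw [fibers, ← comp_def (fiber g), ← image_image]
  refine card_image_of_injOn fun b hb b' _ h => ?_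
  obtain ⟨a, -, rfl⟩ := mem_image.1 hb
  exact mem_fiber.1 (h ▸ mem_fiber.2 rfl : a ∈ fiber g b')

theorem card_fibers_mem_Icc [Nonempty α] [Fintype β] (g : α → β) :
    (fibers g).card ∈ Icc 1 (min (Fintype.card α) (Fintype.card β)) := by
  rw [card_fibers, mem_Icc, le_min_iff]
  exact ⟨card_pos.2 (univ_nonempty.image g), card_image_le, card_le_univ _⟩

end Fibers

namespace IsPartitionInto

variable [DecidableEq α] [DecidableEq β] {q : ℕ} {P : Finset (Finset α)}

theorem apply_eq_of_block_eq (hP : IsPartitionInto q univ P) {g : α → β} (hg : fibers g = P)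
    {a a' : α} (h : hP.block a = hP.block a') : g a = g a' := by
  obtain ⟨c, hc⟩ := mem_fibers.1 (hg.symm.subset (hP.block a).2)
  have ha : a ∈ fiber g (g c) := by rw [hc]; exact hP.mem_block a
  have ha' : a' ∈ fiber g (g c) := by rw [hc, h]; exact hP.mem_block a'
  rw [mem_fiber.1 ha, mem_fiber.1 ha']

theorem comp_surjInv_comp_block (hP : IsPartitionInto q univ P) {g : α → β}
    (hg : fibers g = P) : (g ∘ surjInv hP.block_surjective) ∘ hP.block = g :=
  funext fun _ => hP.apply_eq_of_block_eq hg (rightInverse_surjInv _ _)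

theorem fibers_comp_block_eq_iff (hP : IsPartitionInto q univ P) {f : {J // J ∈ P} → β} :
    fibers (f ∘ hP.block) = P ↔ Injective f := by
  constructor
  · intro h J J' hJJ'
    obtain ⟨a, rfl⟩ := hP.block_surjective J
    obtain ⟨a', rfl⟩ := hP.block_surjective J'
    have hK : fiber (f ∘ hP.block) (f (hP.block a)) ∈ P := h.subset (mem_fibers.2 ⟨a, rfl⟩)
    have ha : a ∈ fiber (f ∘ hP.block) (f (hP.block a)) := mem_fiber.2 rfl
    have ha' : a' ∈ fiber (f ∘ hP.block) (f (hP.block a)) := mem_fiber.2 hJJ'.symm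
    rw [hP.block_eq_iff (J := ⟨_, hK⟩) |>.2 ha, hP.block_eq_iff (J := ⟨_, hK⟩) |>.2 ha']
  · intro hf
    have hfiber (J : {J // J ∈ P}) : fiber (f ∘ hP.block) (f J) = J.1 := by
      ext a
      rw [mem_fiber, comp_apply, hf.eq_iff, hP.block_eq_iff]
    ext K
    refine ⟨fun hK => ?_, fun hK => ?_⟩
    · obtain ⟨a, rfl⟩ := mem_fibers.1 hK
      exact (hfiber _).symm ▸ (hP.block a).2
    · obtain ⟨a, ha⟩ := hP.block_surjective ⟨K, hK⟩
      exact mem_fibers.2 ⟨a, by rw [comp_apply, hfiber, ha]⟩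

theorem sum_injective_prod_pow_card {R : Type*} [CommSemiring R] [Fintype β]
    (hP : IsPartitionInto q univ P) (x : β → R) :
    ∑ f ∈ univ.filter (fun f : {J // J ∈ P} → β => Injective f), ∏ J, x (f J) ^ J.1.card =
      ∑ g ∈ univ.filter (fun g : α → β => fibers g = P), ∏ a, x (g a) := by
  refine sum_nbij' (· ∘ hP.block) (· ∘ surjInv hP.block_surjective) ?_ ?_ ?_ ?_ ?_
  · intro f hf
    simpa [hP.fibers_comp_block_eq_iff] using hf
  · intro g hg
    have hg := (mem_filter.1 hg).2
    rw [mem_filter, ← hP.fibers_comp_block_eq_iff, hP.comp_surjInv_comp_block hg]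
    exact ⟨mem_univ _, hg⟩
  · intro f _
    funext J
    exact congrArg f (rightInverse_surjInv hP.block_surjective J)
  · intro g hg
    exact hP.comp_surjInv_comp_block (mem_filter.1 hg).2
  · intro f _
    exact (hP.prod_comp_block (x ∘ f)).symm

end IsPartitionInto

theorem sum_partitions_sum_injective_prod_pow_card [DecidableEq α] [DecidableEq β] [Nonempty α]
    [Fintype β] {R : Type*} [CommSemiring R] (x : β → R) :
    ∑ q ∈ Icc 1 (min (Fintype.card α) (Fintype.card β)),
      ∑ P ∈ univ.filter (IsPartitionInto q (univ : Finset α)),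
        ∑ f ∈ univ.filter (fun f : {J // J ∈ P} → β => Injective f),
          ∏ J : {J // J ∈ P}, x (f J) ^ J.1.card
      = ∑ g : α → β, ∏ a, x (g a) := by
  calc _ = ∑ q ∈ Icc 1 (min (Fintype.card α) (Fintype.card β)),
        ∑ g ∈ univ.filter (fun g : α → β => (fibers g).card = q), ∏ a, x (g a) := by
        refine sum_congr rfl fun q _ => ?_
        rw [sum_congr rfl fun P hP => (mem_filter.1 hP).2.sum_injective_prod_pow_card x,
          sum_fiberwise_eq_sum_filter]
        simp only [mem_filter, mem_univ, true_and, isPartitionInto_fibers_iff]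
    _ = _ := sum_fiberwise_of_maps_to (fun g _ => card_fibers_mem_Icc g) _

theorem multinomial_type_identity_general (N n : ℕ) (hN : 1 ≤ N) (x : Fin n → ℂ) :
    ∑ q ∈ Finset.Icc 1 (min N n),
      ∑ P ∈ Finset.univ.filter (IsPartitionInto q (Finset.univ : Finset (Fin N))),
        ∑ f ∈ Finset.univ.filter (fun f : {J // J ∈ P} → Fin n => Function.Injective f),
          ∏ J : {J // J ∈ P}, x (f J) ^ (J.1.card)
      = (∑ j, x j) ^ N := by
  have : Nonempty (Fin N) := ⟨⟨0, hN⟩⟩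
  simpa only [Fintype.card_fin, ← Fintype.sum_pow] using
    sum_partitions_sum_injective_prod_pow_card (α := Fin N) x

theorem multinomial_type_identity (N n : ℕ) (hN : 1 ≤ N) (hn : 1 ≤ n) (x : Fin n → ℂ) :
    ∑ q ∈ Finset.Icc 1 (min N n),
      ∑ P ∈ Finset.univ.filter (IsPartitionInto q (Finset.univ : Finset (Fin N))),
        ∑ f ∈ Finset.univ.filter (fun f : {J // J ∈ P} → Fin n => Function.Injective f),
          ∏ J : {J // J ∈ P}, x (f J) ^ (J.1.card)
      = (∑ j, x j) ^ N :=
  multinomial_type_identity_general N n hN x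
end
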